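/- arXiv:1410.8333 — 4 statements merged into one kernel-verified Lean document; each statement's English description precedes it below -/
import Mathlib

section
/- Let X and Y be topological vector spaces, γ ∈ C(0), U a neighborhood of 0 in X, and f ∈ 𝓛_{γ,U}(X, Y). Then f is continuous on X if and only if f is continuous at 0 ∈ X. -/
open Topology Filter Set

noncomputable section

abbrev Rn (n : ℕ) : Type := EuclideanSpace ℝ (Fin n)

/-- The model of `C^∞(Ω)`: functions smooth on `Ω` and vanishing outside `Ω`. -/
def cinfSubmodule (n : ℕ) (Ω : Set (Rn n)) : Submodule ℂ (Rn n → ℂ) where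
  carrier := {g | ContDiffOn ℝ (⊤ : ℕ∞) g Ω ∧ ∀ x ∉ Ω, g x = 0}
  add_mem' := by
    rintro g h ⟨hg1, hg2⟩ ⟨hh1, hh2⟩
    refine ⟨hg1.add hh1, fun x hx => ?_⟩
    simp [Pi.add_apply, hg2 x hx, hh2 x hx]
  zero_mem' := ⟨contDiffOn_const, fun _ _ => rfl⟩
  smul_mem' := by
    rintro c g ⟨hg1, hg2⟩
    refine ⟨hg1.const_smul c, fun x hx => ?_⟩
    simp [hg2 x hx]

/-- The model of the test-function space `C₀^∞(Ω)`. -/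
def testSubmodule (n : ℕ) (Ω : Set (Rn n)) : Submodule ℂ (Rn n → ℂ) where
  carrier := {g | ContDiffOn ℝ (⊤ : ℕ∞) g Ω ∧ (∀ x ∉ Ω, g x = 0) ∧
    IsCompact (tsupport g) ∧ tsupport g ⊆ Ω}
  add_mem' := by
    rintro g h ⟨hg1, hg2, hg3, hg4⟩ ⟨hh1, hh2, hh3, hh4⟩
    have hsub : tsupport (g + h) ⊆ tsupport g ∪ tsupport h := tsupport_add g h
    exact ⟨hg1.add hh1, fun x hx => by simp [hg2 x hx, hh2 x hx],
      (hg3.union hh3).of_isClosed_subset (isClosed_tsupport _) hsub,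
      hsub.trans (union_subset hg4 hh4)⟩
  zero_mem' := by
    have h0 : tsupport (0 : Rn n → ℂ) = ∅ := by simp [tsupport]
    exact ⟨contDiffOn_const, fun _ _ => rfl, by rw [h0]; exact isCompact_empty,
      by rw [h0]; exact empty_subset Ω⟩
  smul_mem' := by
    rintro c g ⟨hg1, hg2, hg3, hg4⟩
    have hsub : tsupport (c • g) ⊆ tsupport g := by
      refine closure_mono fun x hx => ?_
      simp only [Function.mem_support, Pi.smul_apply, smul_eq_mul] at hx ⊢
      exact fun h => hx (by simp [h])
    exact ⟨hg1.const_smul c, fun x hx => by simp [hg2 x hx],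
      hg3.of_isClosed_subset (isClosed_tsupport _) hsub, hsub.trans hg4⟩

abbrev CInfOn (n : ℕ) (Ω : Set (Rn n)) : Type := ↥(cinfSubmodule n Ω)
abbrev TestFn (n : ℕ) (Ω : Set (Rn n)) : Type := ↥(testSubmodule n Ω)

/-- The natural inclusion of `C₀^∞(Ω)` into `C^∞(Ω)`. -/
def toCInf {n : ℕ} {Ω : Set (Rn n)} (ξ : TestFn n Ω) : CInfOn n Ω :=
  ⟨ξ.val, ξ.2.1, ξ.2.2.1⟩

/-- The family of compact subsets of `Ω`. -/
def cptsIn (n : ℕ) (Ω : Set (Rn n)) : Set (Set (Rn n)) := {K | IsCompact K ∧ K ⊆ Ω}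

/-- The family of all iterated derivatives (within `Ω`) of a function, seen as elements of
spaces of uniform convergence on compact subsets of `Ω`. -/
def derivsMap (n : ℕ) (Ω : Set (Rn n)) (g : Rn n → ℂ) :
    (k : ℕ) → UniformOnFun (Rn n) (ContinuousMultilinearMap ℝ (fun _ : Fin k => Rn n) ℂ)
      (cptsIn n Ω) :=
  fun k => (UniformOnFun.ofFun (cptsIn n Ω)) (iteratedFDerivWithin ℝ k g Ω)

/-- The Fréchet topology of `C^∞(Ω)`: uniform convergence of all derivatives on all compact
subsets of `Ω`. -/
instance (priority := 2000) instCInfTop (n : ℕ) (Ω : Set (Rn n)) :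
    TopologicalSpace (CInfOn n Ω) :=
  TopologicalSpace.induced (fun ξ => derivsMap n Ω ξ.val) inferInstance

/-- A candidate topology for the inductive limit topology on `C₀^∞(Ω)`: a locally convex
vector topology making all the inclusions `C^∞(K) → C₀^∞(Ω)` continuous, where `C^∞(K)`
(the test functions supported in the compact set `K ⊆ Ω`) carries the Fréchet topology. -/
def IsLFCandidate (n : ℕ) (Ω : Set (Rn n)) (t : TopologicalSpace (TestFn n Ω)) : Prop :=
  @IsTopologicalAddGroup (TestFn n Ω) t _ ∧
  @ContinuousSMul ℂ (TestFn n Ω) _ _ t ∧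
  @LocallyConvexSpace ℝ (TestFn n Ω) _ _ _ _ t ∧
  ∀ K : Set (Rn n), IsCompact K → K ⊆ Ω →
    @Continuous {ξ : TestFn n Ω // tsupport ξ.val ⊆ K} (TestFn n Ω)
      (TopologicalSpace.induced (fun ζ => derivsMap n Ω ζ.val.val) inferInstance) t
      Subtype.val

/-- The usual inductive limit (LF) topology of `C₀^∞(Ω)`: the finest locally convex vector
topology making all inclusions `C^∞(K) → C₀^∞(Ω)` continuous. -/
instance (priority := 2000) instTestTop (n : ℕ) (Ω : Set (Rn n)) :
    TopologicalSpace (TestFn n Ω) :=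
  sSup {t | IsLFCandidate n Ω t}

/-- The family `C(0)` of the paper. -/
def CzeroFam (γ : ℂ → ℂ) : Prop :=
  Tendsto γ (𝓝 0) (𝓝 0) ∧ γ 0 = 0 ∧ ∀ t : ℂ, ‖t‖ ≤ 1 → ‖t‖ ≤ ‖γ t‖

/-- The family `𝓛_{γ,U}(X, Y)` of demi-linear maps. -/
def DemiL {X Y : Type*} [AddCommGroup X] [Module ℂ X] [AddCommGroup Y] [Module ℂ Y]
    (γ : ℂ → ℂ) (U : Set X) (f : X → Y) : Prop :=
  f 0 = 0 ∧ ∀ x : X, ∀ u ∈ U, ∀ t : ℂ, ‖t‖ ≤ 1 →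
    ∃ r s : ℂ, ‖r - 1‖ ≤ ‖γ t‖ ∧ ‖s‖ ≤ ‖γ t‖ ∧ f (x + t • u) = r • f x + s • f u

/-- The family `𝓚_{γ,U}(X, ℂ)`. -/
def DemiK {X : Type*} [AddCommGroup X] [Module ℂ X]
    (γ : ℂ → ℂ) (U : Set X) (f : X → ℂ) : Prop :=
  f 0 = 0 ∧ ∀ x : X, ∀ u ∈ U, ∀ t : ℂ, ‖t‖ ≤ 1 →
    ∃ s : ℂ, ‖s‖ ≤ ‖γ t‖ ∧ f (x + t • u) = f x + s * f u

/-- `supp ξ = closure {x ∈ Ω : ξ x ≠ 0} ∩ Ω`. -/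
def suppFun {n : ℕ} (Ω : Set (Rn n)) (g : Rn n → ℂ) : Set (Rn n) :=
  closure {x | x ∈ Ω ∧ g x ≠ 0} ∩ Ω

/-- The support of a functional `f` defined on a set `S` of functions on `Ω`. -/
def fsupp {n : ℕ} {S : Type*} (Ω : Set (Rn n)) (coeF : S → (Rn n → ℂ)) (f : S → ℂ) :
    Set (Rn n) :=
  {x | x ∈ Ω ∧ ∀ G : Set (Rn n), IsOpen G → G ⊆ Ω → x ∈ G →
    ∃ ξ : S, suppFun Ω (coeF ξ) ⊆ G ∧ f ξ ≠ 0}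

/-- `Σ_{|α| ≤ k} sup_K |∂^α g|`, expressed via iterated Fréchet derivatives within `Ω`. -/
def pnorm {n : ℕ} (Ω K : Set (Rn n)) (k : ℕ) (g : Rn n → ℂ) : ℝ :=
  ∑ i ∈ Finset.range (k + 1), ⨆ x ∈ K, ‖iteratedFDerivWithin ℝ i g Ω x‖

/-- Condition (1.1) of the paper. -/
def Cond11 {n : ℕ} (Ω : Set (Rn n)) (f : TestFn n Ω → ℂ) : Prop :=
  ∀ K : Set (Rn n), IsCompact K → K ⊆ Ω → ∃ C > 0, ∃ k : ℕ,
    ∀ ξ : TestFn n Ω, suppFun Ω ξ.val ⊆ K → ‖f ξ‖ ≤ C * pnorm Ω K k ξ.val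

/-- Pointwise multiplication of a test function and a smooth function, a test function. -/
def mulTest {n : ℕ} {Ω : Set (Rn n)} (𝒳 : TestFn n Ω) (ξ : CInfOn n Ω) : TestFn n Ω := by
  refine ⟨fun x => 𝒳.val x * ξ.val x, ?_⟩
  obtain ⟨hs, hz, hc, hsubΩ⟩ := 𝒳.2
  obtain ⟨hs', hz'⟩ := ξ.2
  have hsupp : tsupport (fun x => 𝒳.val x * ξ.val x) ⊆ tsupport (𝒳.val : Rn n → ℂ) :=
    tsupport_mul_subset_left
  exact ⟨hs.mul hs', fun x hx => by show 𝒳.val x * ξ.val x = 0; rw [hz x hx, zero_mul],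
    hc.of_isClosed_subset (isClosed_tsupport _) hsupp, hsupp.trans hsubΩ⟩

open scoped Classical in
/-- The canonical extension of a functional on `C₀^∞(Ω)` to smooth functions, defined via
`f`-decompositions `ξ = ξ₀ + ξ₁` with `ξ₀ ∈ C₀^∞(Ω)` and `supp ξ₁ ∩ supp f = ∅`. -/
def canonExt {n : ℕ} {Ω : Set (Rn n)} (f : TestFn n Ω → ℂ) (ξ : CInfOn n Ω) : ℂ :=
  if h : ∃ ξ₀ : TestFn n Ω, suppFun Ω (ξ.val - ξ₀.val) ∩ fsupp Ω Subtype.val f = ∅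
  then f h.choose else 0

end

/-- The family `C(0)` over a general scalar field. -/
def CzeroGen {𝕜 : Type*} [RCLike 𝕜] (γ : 𝕜 → 𝕜) : Prop :=
  Tendsto γ (𝓝 0) (𝓝 0) ∧ γ 0 = 0 ∧ ∀ t : 𝕜, ‖t‖ ≤ 1 → ‖t‖ ≤ ‖γ t‖

/-- The family `𝓛_{γ,U}(X, Y)` over a general scalar field. -/
def DemiLGen {𝕜 X Y : Type*} [RCLike 𝕜] [AddCommGroup X] [Module 𝕜 X]
    [AddCommGroup Y] [Module 𝕜 Y] (γ : 𝕜 → 𝕜) (U : Set X) (f : X → Y) : Prop :=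
  f 0 = 0 ∧ ∀ x : X, ∀ u ∈ U, ∀ t : 𝕜, ‖t‖ ≤ 1 →
    ∃ r s : 𝕜, ‖r - 1‖ ≤ ‖γ t‖ ∧ ‖s‖ ≤ ‖γ t‖ ∧ f (x + t • u) = r • f x + s • f u

/-!
Write a small increment as `h = t • u` with `u ∈ U`. By demi-linearity,
`f (x + t • u) - f x = a • f x + b • f u` with `‖a‖, ‖b‖ ≤ ‖γ t‖`. Fix `t ≠ 0` so small that
`γ t` makes the first term small; then `u = t⁻¹ • h → 0` as `h → 0`, so `f u → 0` by continuity
at `0`, and the second term is small as well.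
-/

theorem exists_smul_add_smul_mem_of_mem_nhds_zero {𝕜 Y : Type*} [NormedField 𝕜]
    [AddCommGroup Y] [Module 𝕜 Y] [TopologicalSpace Y] [ContinuousAdd Y] [ContinuousSMul 𝕜 Y]
    (y : Y) {V : Set Y} (hV : V ∈ 𝓝 (0 : Y)) :
    ∃ ε > 0, ∃ W ∈ 𝓝 (0 : Y), ∀ a b : 𝕜, ‖a‖ < ε → ‖b‖ < ε → ∀ w ∈ W, a • y + b • w ∈ V := by
  have hcont : Tendsto (fun p : (𝕜 × 𝕜) × Y => p.1.1 • y + p.1.2 • p.2)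
      (𝓝 ((0, 0), 0)) (𝓝 0) := by
    have hc : Continuous fun p : (𝕜 × 𝕜) × Y => p.1.1 • y + p.1.2 • p.2 := by fun_prop
    simpa using hc.tendsto ((0, 0), 0)
  obtain ⟨S, hS, W, hW, hSW⟩ := mem_nhds_prod_iff.1 (hcont hV)
  obtain ⟨ε, hε, hball⟩ := Metric.mem_nhds_iff.1 hS
  refine ⟨ε, hε, W, hW, fun a b ha hb w hw => @hSW ((a, b), w) ⟨hball ?_, hw⟩⟩
  simpa [Prod.dist_eq] using And.intro ha hb

namespace DemiLGen

variable {𝕜 X Y : Type*} [RCLike 𝕜] [AddCommGroup X] [Module 𝕜 X] [AddCommGroup Y] [Module 𝕜 Y]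
  {γ : 𝕜 → 𝕜} {U : Set X} {f : X → Y}

theorem exists_sub_eq (hf : DemiLGen γ U f) (x : X) {u : X} (hu : u ∈ U) {t : 𝕜}
    (ht : ‖t‖ ≤ 1) : ∃ a b : 𝕜, ‖a‖ ≤ ‖γ t‖ ∧ ‖b‖ ≤ ‖γ t‖ ∧
      f (x + t • u) - f x = a • f x + b • f u := by
  obtain ⟨r, s, hr, hs, heq⟩ := hf.2 x u hu t ht
  exact ⟨r - 1, s, hr, hs, by rw [heq, sub_smul, one_smul]; abel⟩

variable [TopologicalSpace X] [ContinuousConstSMul 𝕜 X]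
  [TopologicalSpace Y] [ContinuousAdd Y] [ContinuousSMul 𝕜 Y]

theorem tendsto_sub_nhds_zero (hγ : Tendsto γ (𝓝 0) (𝓝 0)) (hU : U ∈ 𝓝 (0 : X))
    (hf : DemiLGen γ U f) (hf0 : Tendsto f (𝓝 0) (𝓝 0)) (x : X) :
    Tendsto (fun h => f (x + h) - f x) (𝓝 0) (𝓝 0) := by
  intro V hV
  obtain ⟨ε, hε, W, hW, hmem⟩ := exists_smul_add_smul_mem_of_mem_nhds_zero (𝕜 := 𝕜) (f x) hV
  obtain ⟨t, ⟨hγt, ht1⟩, ht0⟩ : ∃ t : 𝕜, (‖γ t‖ < ε ∧ ‖t‖ ≤ 1) ∧ t ≠ 0 := by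
    have hsmall : ∀ᶠ t : 𝕜 in 𝓝 0, ‖γ t‖ < ε ∧ ‖t‖ ≤ 1 :=
      ((tendsto_norm_zero.comp hγ).eventually (gt_mem_nhds hε)).and
        (tendsto_norm_zero.eventually (ge_mem_nhds zero_lt_one))
    have hpunct : ∀ᶠ t in 𝓝[≠] (0 : 𝕜), (‖γ t‖ < ε ∧ ‖t‖ ≤ 1) ∧ t ≠ 0 :=
      (hsmall.filter_mono nhdsWithin_le_nhds).and self_mem_nhdsWithin
    exact hpunct.exists
  have hscale : Tendsto (t⁻¹ • ·) (𝓝 0) (𝓝 (0 : X)) := by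
    simpa using (tendsto_id (x := 𝓝 (0 : X))).const_smul t⁻¹
  rw [mem_map]
  filter_upwards [hscale.eventually_mem (inter_mem hU (hf0 hW))] with h ⟨hu, hw⟩
  obtain ⟨a, b, ha, hb, heq⟩ := hf.exists_sub_eq x hu ht1
  rw [smul_inv_smul₀ ht0] at heq
  rw [mem_preimage, heq]
  exact hmem a b (ha.trans_lt hγt) (hb.trans_lt hγt) _ hw

theorem continuous_of_continuousAt_zero [IsTopologicalAddGroup X] (hγ : Tendsto γ (𝓝 0) (𝓝 0))
    (hU : U ∈ 𝓝 (0 : X)) (hf : DemiLGen γ U f) (hf0 : ContinuousAt f 0) : Continuous f := by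
  rw [ContinuousAt, hf.1] at hf0
  refine continuous_iff_continuousAt.2 fun x => ?_
  rw [ContinuousAt, ← map_add_left_nhds_zero x, tendsto_map'_iff]
  simpa [Function.comp_def] using (hf.tendsto_sub_nhds_zero hγ hU hf0 x).add_const (f x)

end DemiLGen

/-- a demi-linear map between topological vector spaces is continuous iff it
is continuous at `0`. -/
theorem stmt12 {𝕜 X Y : Type*} [RCLike 𝕜]
    [AddCommGroup X] [Module 𝕜 X] [TopologicalSpace X] [IsTopologicalAddGroup X]
    [ContinuousSMul 𝕜 X]
    [AddCommGroup Y] [Module 𝕜 Y] [TopologicalSpace Y] [IsTopologicalAddGroup Y]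
    [ContinuousSMul 𝕜 Y]
    (γ : 𝕜 → 𝕜) (hγ : CzeroGen γ) (U : Set X) (hU : U ∈ 𝓝 (0 : X))
    (f : X → Y) (hf : DemiLGen γ U f) :
    Continuous f ↔ ContinuousAt f 0 :=
  ⟨fun h => h.continuousAt, hf.continuous_of_continuousAt_zero hγ.1 hU⟩
end

section
/- Let Ω be a nonempty open subset of ℝⁿ, M ≥ 1, γ(t) = M·t for t ∈ ℂ, and V a neighborhood of 0 in C^∞(Ω). Then for every f ∈ C^∞(Ω)^{[γ,V]} there exist a compact set L ⊆ Ω, a constant C > 0 and k ∈ ℕ∪{0} such that |f(ξ)| ≤ C·Σ_{|α|≤k} sup_L |∂^α ξ| for all ξ ∈ C^∞(Ω). Consequently supp f is compact, f satisfies condition (1.1) on every compact K ⊆ Ω, and f is of order ≤ k. -/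
open Topology Filter Set

/-!
Continuity of `f` at `0` and the neighbourhood `V` give a ball `{ξ | pnorm Ω L k ξ < δ}`
contained in `V` on which `‖f‖ ≤ 1`. Demi-linearity at `x = 0` controls shrinking,
`‖f (t • u)‖ ≤ M ‖t‖ ‖f u‖`, and at `t = 1` controls repeated addition,
`‖f (N • u)‖ ≤ N M ‖f u‖`. Writing any `ξ` as `N • (N s)⁻¹ • (s • ξ)` with `s • ξ` in the
ball gives `‖f ξ‖ ≤ M² / s`, and letting `s` approach `δ / pnorm Ω L k ξ` gives
`‖f ξ‖ ≤ (M² / δ) · pnorm Ω L k ξ`. Since all derivatives of `ξ` vanish on `Ω \ supp ξ`,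
this bound kills every `ξ` supported off `L`, so `supp f ⊆ L` is compact, and it persists
when `L` is replaced by any compact `K ⊇ supp ξ`.
-/

section DemiK

variable {X : Type*} [AddCommGroup X] [Module ℂ X] {m : ℂ} {V : Set X} {f : X → ℂ}

theorem DemiK.norm_map_smul_le (hf : DemiK (fun t => m * t) V f) {u : X} (hu : u ∈ V) {t : ℂ}
    (ht : ‖t‖ ≤ 1) : ‖f (t • u)‖ ≤ ‖m‖ * ‖t‖ * ‖f u‖ := by
  obtain ⟨s, hs, heq⟩ := hf.2 0 u hu t ht
  rw [zero_add, hf.1, zero_add] at heq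
  rw [heq, norm_mul]
  exact mul_le_mul_of_nonneg_right (by simpa using hs) (norm_nonneg _)

theorem DemiK.norm_map_nsmul_le (hf : DemiK (fun t => m * t) V f) {u : X} (hu : u ∈ V)
    (N : ℕ) : ‖f (N • u)‖ ≤ N * ‖m‖ * ‖f u‖ := by
  induction N with
  | zero => simp [hf.1]
  | succ N ih =>
    obtain ⟨s, hs, heq⟩ := hf.2 (N • u) u hu 1 (by simp)
    rw [one_smul] at heq
    rw [succ_nsmul, heq]
    calc ‖f (N • u) + s * f u‖ ≤ ‖f (N • u)‖ + ‖s‖ * ‖f u‖ :=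
          (norm_add_le _ _).trans_eq (by rw [norm_mul])
      _ ≤ N * ‖m‖ * ‖f u‖ + ‖m‖ * ‖f u‖ := by gcongr; simpa using hs
      _ = (N + 1 : ℕ) * ‖m‖ * ‖f u‖ := by push_cast; ring

theorem DemiK.norm_le_of_smul_mem (hf : DemiK (fun t => m * t) V f) {B : Set X}
    (hB : Balanced ℂ B) (hBV : B ⊆ V) (hfB : ∀ u ∈ B, ‖f u‖ ≤ 1) {x : X} {s : ℝ} (hs : 0 < s)
    (hx : (s : ℂ) • x ∈ B) : ‖f x‖ ≤ ‖m‖ ^ 2 / s := by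
  -- `x = N • t • s • x` with `N = ⌈s⁻¹⌉` and `t = (N s)⁻¹`, a scalar of norm at most `1`
  set N := ⌈s⁻¹⌉₊
  have hN : (0 : ℝ) < N := Nat.cast_pos.2 (Nat.ceil_pos.2 (inv_pos.2 hs))
  have hNs : 1 ≤ N * s := (inv_le_iff_one_le_mul₀ hs).1 (Nat.le_ceil s⁻¹)
  set t : ℂ := ((N * s : ℝ) : ℂ)⁻¹
  have hnt : ‖t‖ = (N * s)⁻¹ := by
    rw [norm_inv, Complex.norm_real, Real.norm_of_nonneg (by positivity)]
  have ht : ‖t‖ ≤ 1 := hnt ▸ inv_le_one_of_one_le₀ hNs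
  have hv : t • (s : ℂ) • x ∈ B := hB.smul_mem ht hx
  have hxv : N • t • (s : ℂ) • x = x := by
    have hNs0 : ((N * s : ℝ) : ℂ) ≠ 0 := Complex.ofReal_ne_zero.2 (by linarith)
    have : (N : ℂ) * t * s = 1 := by
      rw [mul_right_comm, ← Complex.ofReal_natCast, ← Complex.ofReal_mul]
      exact mul_inv_cancel₀ hNs0
    rw [← Nat.cast_smul_eq_nsmul ℂ, smul_smul, smul_smul, this, one_smul]
  calc ‖f x‖ = ‖f (N • t • (s : ℂ) • x)‖ := by rw [hxv]
    _ ≤ N * ‖m‖ * ‖f (t • (s : ℂ) • x)‖ := hf.norm_map_nsmul_le (hBV hv) N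
    _ ≤ N * ‖m‖ * (‖m‖ * ‖t‖ * 1) := by
      gcongr
      exact (hf.norm_map_smul_le (hBV hx) ht).trans (by gcongr; exact hfB _ hx)
    _ = ‖m‖ ^ 2 / s := by rw [hnt]; field_simp

theorem DemiK.norm_le_mul_of_ball (hf : DemiK (fun t => m * t) V f) {p : X → ℝ}
    (hp0 : ∀ x, 0 ≤ p x) (hp : ∀ (c : ℂ) x, p (c • x) ≤ ‖c‖ * p x) {δ : ℝ} (hδ : 0 < δ)
    (hball : ∀ x, p x < δ → x ∈ V ∧ ‖f x‖ ≤ 1) (x : X) : ‖f x‖ ≤ ‖m‖ ^ 2 / δ * p x := by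
  have hB : Balanced ℂ {y | p y < δ} := by
    rintro a ha _ ⟨y, hy, rfl⟩
    exact ((hp a y).trans (mul_le_of_le_one_left (hp0 y) ha)).trans_lt hy
  have hq : ∀ q > p x, ‖f x‖ ≤ ‖m‖ ^ 2 / δ * q := by
    intro q hq
    have hq0 : 0 < q := (hp0 x).trans_lt hq
    have hsx : p (((δ / q : ℝ) : ℂ) • x) < δ := by
      calc p (((δ / q : ℝ) : ℂ) • x) ≤ δ / q * p x := by
            simpa [abs_of_pos hδ, abs_of_pos hq0] using hp ((δ / q : ℝ) : ℂ) x
        _ < δ / q * q := by gcongr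
        _ = δ := by field_simp
    have := hf.norm_le_of_smul_mem hB (fun y hy => (hball y hy).1) (fun y hy => (hball y hy).2)
      (div_pos hδ hq0) hsx
    rwa [div_div_eq_mul_div, mul_div_right_comm] at this
  exact ge_of_tendsto
    (((continuous_const_mul _).tendsto (p x)).mono_left (nhdsWithin_le_nhds (s := Ioi (p x))))
    (eventually_nhdsWithin_of_forall hq)

end DemiK

theorem Real.biSup_nonneg {α : Type*} {K : Set α} {g : α → ℝ} (h : ∀ x ∈ K, 0 ≤ g x) :
    0 ≤ ⨆ x ∈ K, g x :=
  Real.iSup_nonneg fun x => Real.iSup_nonneg fun hx => h x hx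

theorem Real.biSup_le {α : Type*} {K : Set α} {g : α → ℝ} {B : ℝ} (hB : 0 ≤ B)
    (h : ∀ x ∈ K, g x ≤ B) : ⨆ x ∈ K, g x ≤ B :=
  Real.iSup_le (fun x => Real.iSup_le (h x) hB) hB

theorem le_biSup_of_bddAbove_image {α β : Type*} [ConditionallyCompleteLattice β] {K : Set α}
    {g : α → β} (hg : BddAbove (g '' K)) {x : α} (hx : x ∈ K) : g x ≤ ⨆ y ∈ K, g y :=
  le_ciSup₂ (f := fun y (_ : y ∈ K) => g y)
    (hg.mono (iUnion_subset fun y => by rintro _ ⟨hy, rfl⟩; exact mem_image_of_mem g hy)) x hx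

section Pnorm

variable {n : ℕ} {Ω K L : Set (Rn n)}

theorem pnorm_nonneg (k : ℕ) (g : Rn n → ℂ) : 0 ≤ pnorm Ω K k g :=
  Finset.sum_nonneg fun _ _ => Real.biSup_nonneg fun _ _ => norm_nonneg _

theorem pnorm_empty (k : ℕ) (g : Rn n → ℂ) : pnorm Ω ∅ k g = 0 := by
  simp [pnorm]

theorem norm_iteratedFDerivWithin_le_biSup (hΩ : IsOpen Ω) {g : Rn n → ℂ}
    (hg : ContDiffOn ℝ (⊤ : ℕ∞) g Ω) (hK : IsCompact K) (hKΩ : K ⊆ Ω) (i : ℕ) {x : Rn n}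
    (hx : x ∈ K) :
    ‖iteratedFDerivWithin ℝ i g Ω x‖ ≤ ⨆ y ∈ K, ‖iteratedFDerivWithin ℝ i g Ω y‖ := by
  have hcont : ContinuousOn (fun y => ‖iteratedFDerivWithin ℝ i g Ω y‖) K :=
    ((hg.continuousOn_iteratedFDerivWithin (by exact_mod_cast le_top) hΩ.uniqueDiffOn).mono
      hKΩ).norm
  exact le_biSup_of_bddAbove_image (hK.image_of_continuousOn hcont).bddAbove hx

theorem norm_iteratedFDerivWithin_le_pnorm (hΩ : IsOpen Ω) {g : Rn n → ℂ}
    (hg : ContDiffOn ℝ (⊤ : ℕ∞) g Ω) (hK : IsCompact K) (hKΩ : K ⊆ Ω) {i k : ℕ} (hik : i ≤ k)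
    {x : Rn n} (hx : x ∈ K) : ‖iteratedFDerivWithin ℝ i g Ω x‖ ≤ pnorm Ω K k g :=
  (norm_iteratedFDerivWithin_le_biSup hΩ hg hK hKΩ i hx).trans <|
    Finset.single_le_sum (f := fun j => ⨆ y ∈ K, ‖iteratedFDerivWithin ℝ j g Ω y‖)
      (fun _ _ => Real.biSup_nonneg fun _ _ => norm_nonneg _)
      (Finset.mem_range.2 (Nat.lt_succ_of_le hik))

theorem pnorm_smul_le (hΩ : IsOpen Ω) {g : Rn n → ℂ} (hg : ContDiffOn ℝ (⊤ : ℕ∞) g Ω)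
    (hK : IsCompact K) (hKΩ : K ⊆ Ω) (k : ℕ) (c : ℂ) :
    pnorm Ω K k (c • g) ≤ ‖c‖ * pnorm Ω K k g := by
  rw [pnorm, pnorm, Finset.mul_sum]
  refine Finset.sum_le_sum fun i _ => Real.biSup_le
    (mul_nonneg (norm_nonneg c) (Real.biSup_nonneg fun _ _ => norm_nonneg _)) fun x hx => ?_
  rw [iteratedFDerivWithin_const_smul_apply ((hg x (hKΩ hx)).of_le (by exact_mod_cast le_top))
    hΩ.uniqueDiffOn (hKΩ hx), norm_smul]
  exact mul_le_mul_of_nonneg_left (norm_iteratedFDerivWithin_le_biSup hΩ hg hK hKΩ i hx)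
    (norm_nonneg c)

theorem iteratedFDerivWithin_eq_zero_of_notMem_suppFun (ξ : CInfOn n Ω) {x : Rn n}
    (hx : x ∈ Ω) (hξx : x ∉ suppFun Ω ξ.val) (i : ℕ) :
    iteratedFDerivWithin ℝ i ξ.val Ω x = 0 := by
  set S := closure {y | y ∈ Ω ∧ ξ.val y ≠ 0}
  have hxS : x ∉ S := fun h => hξx ⟨h, hx⟩
  have hzero : ∀ y ∉ S, ξ.val y = 0 := fun y hy => by
    by_cases hyΩ : y ∈ Ω
    · by_contra hne
      exact hy (subset_closure ⟨hyΩ, hne⟩)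
    · exact ξ.2.2 y hyΩ
  have heq : ξ.val =ᶠ[𝓝[Ω] x] fun _ => 0 :=
    (eventually_of_mem (isClosed_closure.isOpen_compl.mem_nhds hxS) hzero).filter_mono
      nhdsWithin_le_nhds
  rw [heq.iteratedFDerivWithin_eq (hzero x hxS) i, iteratedFDerivWithin_fun_zero, Pi.zero_apply]

theorem pnorm_le_of_inter_suppFun_subset (hΩ : IsOpen Ω) (ξ : CInfOn n Ω) (hLΩ : L ⊆ Ω)
    (hK : IsCompact K) (hKΩ : K ⊆ Ω) (h : L ∩ suppFun Ω ξ.val ⊆ K) (k : ℕ) :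
    pnorm Ω L k ξ.val ≤ pnorm Ω K k ξ.val := by
  refine Finset.sum_le_sum fun i _ => Real.biSup_le (Real.biSup_nonneg fun _ _ => norm_nonneg _)
    fun y hyL => ?_
  by_cases hy : y ∈ suppFun Ω ξ.val
  · exact norm_iteratedFDerivWithin_le_biSup hΩ ξ.2.1 hK hKΩ i (h ⟨hyL, hy⟩)
  · rw [iteratedFDerivWithin_eq_zero_of_notMem_suppFun ξ (hLΩ hyL) hy, norm_zero]
    exact Real.biSup_nonneg fun _ _ => norm_nonneg _

theorem cptsIn_nonempty : (cptsIn n Ω).Nonempty :=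
  ⟨∅, isCompact_empty, empty_subset Ω⟩

theorem directedOn_cptsIn : DirectedOn (· ⊆ ·) (cptsIn n Ω) := by
  rintro K₁ ⟨h₁, h₁Ω⟩ K₂ ⟨h₂, h₂Ω⟩
  exact ⟨K₁ ∪ K₂, ⟨h₁.union h₂, union_subset h₁Ω h₂Ω⟩, subset_union_left, subset_union_right⟩

theorem exists_mem_cptsIn_of_mem_nhds_derivsMap_zero {i : ℕ} {t : Set _}
    (ht : t ∈ 𝓝 (derivsMap n Ω 0 i)) :
    ∃ K ∈ cptsIn n Ω, ∃ ε > 0, ∀ g : Rn n → ℂ,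
      (∀ x ∈ K, ‖iteratedFDerivWithin ℝ i g Ω x‖ < ε) → derivsMap n Ω g i ∈ t := by
  obtain ⟨⟨K, ε⟩, ⟨hK, hε⟩, hKε⟩ := (UniformOnFun.hasBasis_nhds_of_basis _ _ _ _ cptsIn_nonempty
    directedOn_cptsIn Metric.uniformity_basis_dist).mem_iff.1 ht
  refine ⟨K, hK, ε, hε, fun g hg => hKε fun x hx => ?_⟩
  simpa [derivsMap, iteratedFDerivWithin_fun_zero] using hg x hx

theorem exists_pnorm_ball_subset_of_mem_nhds (hΩ : IsOpen Ω) {W : Set (CInfOn n Ω)}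
    (hW : W ∈ 𝓝 0) : ∃ L : Set (Rn n), IsCompact L ∧ L ⊆ Ω ∧ ∃ k : ℕ, ∃ δ > 0,
      ∀ ξ : CInfOn n Ω, pnorm Ω L k ξ.val < δ → ξ ∈ W := by
  rw [nhds_induced, mem_comap] at hW
  obtain ⟨T, hT, hTW⟩ := hW
  rw [nhds_pi, Filter.mem_pi] at hT
  obtain ⟨I, hI, t, ht, hIT⟩ := hT
  choose K hK ε hε hKε using fun i => exists_mem_cptsIn_of_mem_nhds_derivsMap_zero (ht i)
  -- `0 ∈ F` only makes `F` nonempty, so that `F.inf' _ ε` is defined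
  set F := insert 0 hI.toFinset
  have hL : IsCompact (⋃ i ∈ F, K i) := F.finite_toSet.isCompact_biUnion fun i _ => (hK i).1
  have hLΩ : ⋃ i ∈ F, K i ⊆ Ω := iUnion₂_subset fun i _ => (hK i).2
  refine ⟨_, hL, hLΩ, F.sup id, F.inf' (Finset.insert_nonempty _ _) ε,
    (Finset.lt_inf'_iff _).2 fun i _ => hε i, fun ξ hξ => hTW (hIT fun i hi => ?_)⟩
  have hiF : i ∈ F := Finset.mem_insert_of_mem (hI.mem_toFinset.2 hi)
  refine hKε i _ fun x hx => ?_
  calc ‖iteratedFDerivWithin ℝ i ξ.val Ω x‖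
      ≤ pnorm Ω (⋃ i ∈ F, K i) (F.sup id) ξ.val :=
        norm_iteratedFDerivWithin_le_pnorm hΩ ξ.2.1 hL hLΩ (F.le_sup (f := id) hiF)
          (mem_biUnion hiF hx)
    _ < _ := hξ
    _ ≤ ε i := F.inf'_le _ hiF

theorem fsupp_subset_of_norm_le_pnorm (hΩ : IsOpen Ω) (hL : IsCompact L) (hLΩ : L ⊆ Ω)
    {f : CInfOn n Ω → ℂ} {C : ℝ} {k : ℕ} (hf : ∀ ξ : CInfOn n Ω, ‖f ξ‖ ≤ C * pnorm Ω L k ξ.val) :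
    fsupp Ω Subtype.val f ⊆ L := by
  rintro x ⟨hxΩ, hx⟩
  by_contra hxL
  obtain ⟨ξ, hξ, hfξ⟩ := hx (Ω \ L) (hΩ.sdiff hL.isClosed) sdiff_subset ⟨hxΩ, hxL⟩
  have hpξ : pnorm Ω L k ξ.val = 0 := by
    refine le_antisymm ?_ (pnorm_nonneg k _)
    simpa [pnorm_empty] using pnorm_le_of_inter_suppFun_subset hΩ ξ hLΩ isCompact_empty
      (empty_subset Ω) (fun y hy => (hξ hy.2).2 hy.1) k
  exact hfξ (norm_le_zero_iff.1 (by simpa [hpξ] using hf ξ))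

theorem isCompact_fsupp_of_subset {S : Type*} {coeF : S → Rn n → ℂ} {f : S → ℂ}
    (hL : IsCompact L) (hLΩ : L ⊆ Ω) (h : fsupp Ω coeF f ⊆ L) : IsCompact (fsupp Ω coeF f) := by
  refine hL.of_isClosed_subset (isClosed_of_closure_subset fun z hz => ?_) h
  have hzL : z ∈ L := closure_minimal h hL.isClosed hz
  refine ⟨hLΩ hzL, fun G hG hGΩ hzG => ?_⟩
  obtain ⟨x, hxG, hx⟩ := mem_closure_iff.1 hz G hG hzG
  exact hx.2 G hG hGΩ hxG

end Pnorm

theorem stmt15_general (n : ℕ) (Ω : Set (Rn n)) (hΩ : IsOpen Ω)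
    (M : ℝ) (hM : 1 ≤ M)
    (V : Set (CInfOn n Ω)) (hV : V ∈ 𝓝 (0 : CInfOn n Ω))
    (f : CInfOn n Ω → ℂ) (hf : DemiK (fun t : ℂ => (M : ℂ) * t) V f)
    (hc : Continuous f) :
    ∃ L : Set (Rn n), IsCompact L ∧ L ⊆ Ω ∧ ∃ C > 0, ∃ k : ℕ,
      (∀ ξ : CInfOn n Ω, ‖f ξ‖ ≤ C * pnorm Ω L k ξ.val) ∧
      IsCompact (fsupp Ω Subtype.val f) ∧
      (∀ K : Set (Rn n), IsCompact K → K ⊆ Ω → ∃ C' > 0,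
        ∀ ξ : CInfOn n Ω, suppFun Ω ξ.val ⊆ K → ‖f ξ‖ ≤ C' * pnorm Ω K k ξ.val) := by
  have hf1 : f ⁻¹' Metric.ball 0 1 ∈ 𝓝 (0 : CInfOn n Ω) :=
    hc.continuousAt.preimage_mem_nhds (by rw [hf.1]; exact Metric.ball_mem_nhds 0 one_pos)
  obtain ⟨L, hL, hLΩ, k, δ, hδ, hball⟩ :=
    exists_pnorm_ball_subset_of_mem_nhds hΩ (inter_mem hV hf1)
  have hbound : ∀ ξ : CInfOn n Ω, ‖f ξ‖ ≤ ‖(M : ℂ)‖ ^ 2 / δ * pnorm Ω L k ξ.val :=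
    hf.norm_le_mul_of_ball (fun ξ => pnorm_nonneg k ξ.val)
      (fun c ξ => pnorm_smul_le hΩ ξ.2.1 hL hLΩ k c) hδ
      (fun ξ hξ => ⟨(hball ξ hξ).1, (mem_ball_zero_iff.1 (hball ξ hξ).2).le⟩)
  have hC : 0 < ‖(M : ℂ)‖ ^ 2 / δ := by
    have : (M : ℂ) ≠ 0 := Complex.ofReal_ne_zero.2 (by linarith)
    positivity
  refine ⟨L, hL, hLΩ, _, hC, k, hbound,
    isCompact_fsupp_of_subset hL hLΩ (fsupp_subset_of_norm_le_pnorm hΩ hL hLΩ hbound),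
    fun K hK hKΩ => ⟨_, hC, fun ξ hξ => (hbound ξ).trans ?_⟩⟩
  exact mul_le_mul_of_nonneg_left
    (pnorm_le_of_inter_suppFun_subset hΩ ξ hLΩ hK hKΩ (inter_subset_right.trans hξ) k) hC.le

/-- every `f ∈ C^∞(Ω)^{[γ,V]}` with `γ t = M·t`, `M ≥ 1`, is dominated by a
single seminorm `C·Σ_{|α| ≤ k} sup_L |∂^α ·|`; consequently `supp f` is compact, condition
(1.1) holds for `f`, and `f` is of order `≤ k`. -/
theorem stmt15 (n : ℕ) (Ω : Set (Rn n)) (hΩ : IsOpen Ω) (hne : Ω.Nonempty)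
    (M : ℝ) (hM : 1 ≤ M)
    (V : Set (CInfOn n Ω)) (hV : V ∈ 𝓝 (0 : CInfOn n Ω))
    (f : CInfOn n Ω → ℂ) (hf : DemiK (fun t : ℂ => (M : ℂ) * t) V f)
    (hc : Continuous f) :
    ∃ L : Set (Rn n), IsCompact L ∧ L ⊆ Ω ∧ ∃ C > 0, ∃ k : ℕ,
      (∀ ξ : CInfOn n Ω, ‖f ξ‖ ≤ C * pnorm Ω L k ξ.val) ∧
      IsCompact (fsupp Ω Subtype.val f) ∧
      (∀ K : Set (Rn n), IsCompact K → K ⊆ Ω → ∃ C' > 0,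
        ∀ ξ : CInfOn n Ω, suppFun Ω ξ.val ⊆ K → ‖f ξ‖ ≤ C' * pnorm Ω K k ξ.val) :=
  stmt15_general n Ω hΩ M hM V hV f hf hc
end

section
/- Let Ω be a nonempty open subset of ℝⁿ, M ≥ 1, γ(t) = M·t for t ∈ ℂ. If f ∈ C^∞(Ω)^{[γ,V]} is of order ≤ k and ξ ∈ C^∞(Ω) satisfies ∂^α ξ(x) = 0 for all multi-indices α with |α| ≤ k and all x ∈ supp f, then f(ξ) = 0. -/
open Topology Filter Set

/-!
Continuity of `f` reduces the theorem to compactly supported `ξ`: multiplying `ξ` by a cutoff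
equal to `1` near the compact set that controls a basic neighbourhood of `ξ` keeps it in that
neighbourhood, and keeps all derivatives of order `≤ k` zero on `supp f`.

For compactly supported `ξ`, let `F` be the part of `supp f` in `supp ξ` and let `χ_ε` be a
mollified indicator, equal to `1` on the `ε`-neighbourhood of `F`, vanishing off its
`3ε`-neighbourhood, with `‖D^j χ_ε‖ ≤ I ε⁻ʲ`. As `ξ` is flat to order `k` on `F`, Taylor's
estimate `‖D^m ξ‖ ≤ B (3ε)^(k+1-m)` near `F` and Leibniz' rule give `‖D^i (χ_ε ξ)‖ = O(ε)` for
`i ≤ k`. The rest `(1 - χ_ε) ξ` is supported away from `supp f`; a partition of unity writes it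
as a finite sum of pieces supported where `f` vanishes, and demi-linearity makes each piece a
period of `f`, so `f ξ = f (χ_ε ξ)`. Demi-linearity and the order bound then give
`‖f (χ_ε ξ)‖ ≤ M C (k+1) O(ε)`, whence `f ξ = 0`.
-/

open MeasureTheory Metric
open scoped ContDiff Convolution Manifold

namespace DemiK

variable {X : Type*} [AddCommGroup X] [Module ℂ X] {M : ℝ} {V : Set X} {f : X → ℂ}

theorem norm_map_add_nsmul_sub_le (hM : 0 ≤ M) (hf : DemiK (fun t : ℂ => (M : ℂ) * t) V f)
    {u : X} (hu : u ∈ V) {t : ℂ} (ht : ‖t‖ ≤ 1) (x : X) (N : ℕ) :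
    ‖f (x + N • t • u) - f x‖ ≤ N * (M * ‖t‖ * ‖f u‖) := by
  induction N with
  | zero => simp
  | succ N ih =>
    obtain ⟨s, hs, heq⟩ := hf.2 (x + N • t • u) u hu t ht
    rw [norm_mul, Complex.norm_real, Real.norm_of_nonneg hM] at hs
    calc ‖f (x + (N + 1) • t • u) - f x‖
        = ‖(f (x + N • t • u) - f x) + s * f u‖ := by
          rw [succ_nsmul, ← add_assoc, heq]; ring_nf
      _ ≤ N * (M * ‖t‖ * ‖f u‖) + M * ‖t‖ * ‖f u‖ := by
          grw [norm_add_le, ih, norm_mul, hs]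
      _ = (N + 1 : ℕ) * (M * ‖t‖ * ‖f u‖) := by push_cast; ring

theorem norm_map_add_sub_le (hM : 0 ≤ M) (hf : DemiK (fun t : ℂ => (M : ℂ) * t) V f)
    (x η : X) {c : ℝ} (hc : 0 < c) (hcV : (c : ℂ) • η ∈ V) :
    ‖f (x + η) - f x‖ ≤ M / c * ‖f ((c : ℂ) • η)‖ := by
  -- `η = N • t • (c • η)` with `N = ⌈c⁻¹⌉` and `t = (N c)⁻¹`, and `‖t‖ ≤ 1`
  set N : ℕ := ⌈c⁻¹⌉₊
  have hNc : 1 ≤ (N : ℝ) * c := by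
    rw [← inv_mul_cancel₀ hc.ne']
    exact mul_le_mul_of_nonneg_right (Nat.le_ceil _) hc.le
  have hN : N ≠ 0 := by rintro h; norm_num [h] at hNc
  have ht : ‖(((N : ℝ) * c : ℝ) : ℂ)⁻¹‖ = ((N : ℝ) * c)⁻¹ := by
    rw [norm_inv, Complex.norm_real, Real.norm_of_nonneg (by positivity)]
  have hη : N • (((N : ℝ) * c : ℝ) : ℂ)⁻¹ • (c : ℂ) • η = η := by
    rw [← Nat.cast_smul_eq_nsmul ℂ, smul_smul, smul_smul]
    convert one_smul ℂ η
    push_cast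
    field_simp [hN, hc.ne']
  have h := norm_map_add_nsmul_sub_le hM hf hcV (ht.trans_le (inv_le_one_of_one_le₀ hNc)) x N
  rw [hη, ht] at h
  calc ‖f (x + η) - f x‖ ≤ N * (M * ((N : ℝ) * c)⁻¹ * ‖f ((c : ℂ) • η)‖) := h
    _ = M / c * ‖f ((c : ℂ) • η)‖ := by field_simp [hN]

theorem periodic_of_map_smul_eq_zero (hM : 0 ≤ M) (hf : DemiK (fun t : ℂ => (M : ℂ) * t) V f)
    {η : X} {c : ℝ} (hc : 0 < c) (hcV : (c : ℂ) • η ∈ V) (hzero : f ((c : ℂ) • η) = 0) :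
    Function.Periodic f η := fun x => by
  have h := norm_map_add_sub_le hM hf x η hc hcV
  rwa [hzero, norm_zero, mul_zero, norm_le_zero_iff, sub_eq_zero] at h

end DemiK

theorem ContDiffOn.exists_bound_iteratedFDerivWithin {𝕜 E F : Type*} [NontriviallyNormedField 𝕜]
    [NormedAddCommGroup E] [NormedSpace 𝕜 E] [NormedAddCommGroup F] [NormedSpace 𝕜 F]
    {g : E → F} {s K : Set E} (hg : ContDiffOn 𝕜 ∞ g s) (hs : UniqueDiffOn 𝕜 s)
    (hK : IsCompact K) (hKs : K ⊆ s) (m : ℕ) :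
    ∃ C, 0 ≤ C ∧ ∀ i ≤ m, ∀ x ∈ K, ‖iteratedFDerivWithin 𝕜 i g s x‖ ≤ C := by
  have hcont : ContinuousOn
      (fun x => ∑ i ∈ Finset.range (m + 1), ‖iteratedFDerivWithin 𝕜 i g s x‖) K :=
    continuousOn_finsetSum _ fun i _ =>
      ((hg.continuousOn_iteratedFDerivWithin (by exact_mod_cast le_top) hs).norm).mono hKs
  obtain ⟨C, hC⟩ := hK.exists_bound_of_continuousOn hcont
  refine ⟨max C 0, le_max_right _ _, fun i hi x hx => ?_⟩
  calc ‖iteratedFDerivWithin 𝕜 i g s x‖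
      ≤ ∑ i ∈ Finset.range (m + 1), ‖iteratedFDerivWithin 𝕜 i g s x‖ :=
        Finset.single_le_sum (f := fun j => ‖iteratedFDerivWithin 𝕜 j g s x‖)
          (fun _ _ => norm_nonneg _) (Finset.mem_range.2 (Nat.lt_succ_of_le hi))
    _ ≤ C := (Real.le_norm_self _).trans (hC x hx)
    _ ≤ max C 0 := le_max_left _ _

theorem iteratedFDerivWithin_smul_eq_zero {𝕜 E F : Type*} [NontriviallyNormedField 𝕜]
    [NormedAddCommGroup E] [NormedSpace 𝕜 E] [NormedAddCommGroup F] [NormedSpace 𝕜 F]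
    {ψ : E → 𝕜} {g : E → F} {s : Set E} {y : E} {i : ℕ} (hψ : ContDiffOn 𝕜 i ψ s)
    (hg : ContDiffOn 𝕜 i g s) (hs : UniqueDiffOn 𝕜 s) (hy : y ∈ s)
    (hflat : ∀ j ≤ i, iteratedFDerivWithin 𝕜 j g s y = 0) :
    iteratedFDerivWithin 𝕜 i (fun x => ψ x • g x) s y = 0 := by
  refine norm_le_zero_iff.1 ((norm_iteratedFDerivWithin_smul_le hψ hg hs hy le_rfl).trans ?_)
  simp [hflat _ (Nat.sub_le _ _)]

theorem norm_iteratedFDerivWithin_le_of_flat {E F : Type*} [NormedAddCommGroup E]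
    [NormedSpace ℝ E] [NormedAddCommGroup F] [NormedSpace ℝ F] {g : E → F} {s : Set E} {k : ℕ}
    (hs : UniqueDiffOn ℝ s) (hg : ContDiffOn ℝ (k + 1) g s) {y : E} {r B : ℝ}
    (hball : closedBall y r ⊆ s)
    (hB : ∀ z ∈ closedBall y r, ‖iteratedFDerivWithin ℝ (k + 1) g s z‖ ≤ B)
    (hflat : ∀ i ≤ k, iteratedFDerivWithin ℝ i g s y = 0) :
    ∀ i ≤ k + 1, ∀ z ∈ closedBall y r, ‖iteratedFDerivWithin ℝ i g s z‖ ≤ B * r ^ (k + 1 - i) := by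
  suffices h : ∀ j ≤ k + 1, ∀ z ∈ closedBall y r,
      ‖iteratedFDerivWithin ℝ (k + 1 - j) g s z‖ ≤ B * r ^ j by
    intro i hi z hz
    have := h (k + 1 - i) (Nat.sub_le _ _) z hz
    rwa [Nat.sub_sub_self hi] at this
  intro j
  induction j with
  | zero => simpa using hB
  | succ j ih =>
    intro hj z hz
    set i := k + 1 - (j + 1)
    have hi : i + 1 = k + 1 - j := by omega
    have hder : ∀ w ∈ closedBall y r, HasFDerivWithinAt (iteratedFDerivWithin ℝ i g s)
        (fderivWithin ℝ (iteratedFDerivWithin ℝ i g s) s w) (closedBall y r) w := fun w hw =>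
      ((hg.differentiableOn_iteratedFDerivWithin (by norm_cast; omega) hs) w
        (hball hw)).hasFDerivWithinAt.mono hball
    have hbound : ∀ w ∈ closedBall y r,
        ‖fderivWithin ℝ (iteratedFDerivWithin ℝ i g s) s w‖ ≤ B * r ^ j := fun w hw => by
      rw [norm_fderivWithin_iteratedFDerivWithin, hi]
      exact ih (by omega) w hw
    have hy : y ∈ closedBall y r := mem_closedBall_self (dist_nonneg.trans (mem_closedBall.1 hz))
    have hmvt := (convex_closedBall y r).norm_image_sub_le_of_norm_hasFDerivWithin_le hder hbound
      hy hz
    rw [hflat i (by omega), sub_zero] at hmvt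
    calc ‖iteratedFDerivWithin ℝ i g s z‖ ≤ B * r ^ j * ‖z - y‖ := hmvt
      _ ≤ B * r ^ j * r := by
        gcongr
        · exact (norm_nonneg (fderivWithin ℝ (iteratedFDerivWithin ℝ i g s) s y)).trans
            (hbound y hy)
        · exact mem_closedBall_iff_norm.1 hz
      _ = B * r ^ (j + 1) := by ring

theorem norm_iteratedFDerivWithin_smul_le_of_scaled_bounds {E F : Type*} [NormedAddCommGroup E]
    [NormedSpace ℝ E] [NormedAddCommGroup F] [NormedSpace ℝ F] {χ : E → ℝ} {g : E → F}
    {s : Set E} (hχ : ContDiffOn ℝ ∞ χ s) (hg : ContDiffOn ℝ ∞ g s) (hs : UniqueDiffOn ℝ s)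
    {x : E} (hx : x ∈ s) {k : ℕ} {I B a ε : ℝ} (hI : 0 ≤ I) (hB : 0 ≤ B) (ha : 1 ≤ a)
    (hε : 0 < ε) (hε1 : ε ≤ 1) (hχx : ∀ j ≤ k, ‖iteratedFDerivWithin ℝ j χ s x‖ ≤ I / ε ^ j)
    (hgx : ∀ m ≤ k + 1, ‖iteratedFDerivWithin ℝ m g s x‖ ≤ B * (a * ε) ^ (k + 1 - m))
    {i : ℕ} (hi : i ≤ k) :
    ‖iteratedFDerivWithin ℝ i (fun x => χ x • g x) s x‖ ≤ 2 ^ k * (I * B * a ^ (k + 1)) * ε := by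
  have hterm : ∀ j ∈ Finset.range (i + 1),
      (i.choose j : ℝ) * ‖iteratedFDerivWithin ℝ j χ s x‖ *
        ‖iteratedFDerivWithin ℝ (i - j) g s x‖ ≤ i.choose j * (I * B * a ^ (k + 1) * ε) := by
    intro j hj
    have hji : j ≤ i := Nat.lt_succ_iff.1 (Finset.mem_range.1 hj)
    rw [mul_assoc]
    refine mul_le_mul_of_nonneg_left ?_ (Nat.cast_nonneg _)
    calc ‖iteratedFDerivWithin ℝ j χ s x‖ * ‖iteratedFDerivWithin ℝ (i - j) g s x‖
        ≤ I / ε ^ j * (B * (a * ε) ^ (k + 1 - (i - j))) :=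
          mul_le_mul (hχx j (hji.trans hi)) (hgx _ (by omega)) (norm_nonneg _) (by positivity)
      _ = I * B * a ^ (k + 1 - (i - j)) * ε ^ (k + 1 - i) := by
          rw [show k + 1 - (i - j) = (k + 1 - i) + j by omega, mul_pow, pow_add ε]
          field_simp
      _ ≤ I * B * a ^ (k + 1) * ε ^ 1 := by
          gcongr ?_ * ?_
          · gcongr I * B * ?_
            exact pow_le_pow_right₀ ha (by omega)
          · exact pow_le_pow_of_le_one hε.le hε1 (by omega)
      _ = I * B * a ^ (k + 1) * ε := by rw [pow_one]
  calc ‖iteratedFDerivWithin ℝ i (fun x => χ x • g x) s x‖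
      ≤ ∑ j ∈ Finset.range (i + 1), (i.choose j : ℝ) * ‖iteratedFDerivWithin ℝ j χ s x‖ *
          ‖iteratedFDerivWithin ℝ (i - j) g s x‖ :=
        norm_iteratedFDerivWithin_smul_le hχ hg hs hx (by exact_mod_cast le_top)
    _ ≤ ∑ j ∈ Finset.range (i + 1), (i.choose j : ℝ) * (I * B * a ^ (k + 1) * ε) :=
        Finset.sum_le_sum hterm
    _ = 2 ^ i * (I * B * a ^ (k + 1) * ε) := by
        rw [← Finset.sum_mul, ← Nat.cast_sum, Nat.sum_range_choose, Nat.cast_pow, Nat.cast_two]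
    _ ≤ 2 ^ k * (I * B * a ^ (k + 1) * ε) := by gcongr; norm_num
    _ = 2 ^ k * (I * B * a ^ (k + 1)) * ε := by ring

universe u

-- `G` and `F` share a universe so that the induction can pass from `g` to `fderiv ℝ g`.
theorem norm_iteratedFDeriv_convolution_le {G F : Type u} [NormedAddCommGroup G]
    [NormedSpace ℝ G] [MeasurableSpace G] [BorelSpace G] {μ : Measure G} [SFinite μ]
    [IsFiniteMeasureOnCompacts μ] [μ.IsAddLeftInvariant] [μ.IsNegInvariant]
    [NormedAddCommGroup F] [NormedSpace ℝ F]
    {w : G → ℝ} (hw : LocallyIntegrable w μ) (hw1 : ∀ y, ‖w y‖ ≤ 1)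
    {g : G → F} (hg : ContDiff ℝ ∞ g) (hcg : HasCompactSupport g) (j : ℕ) (x : G) :
    ‖iteratedFDeriv ℝ j (w ⋆[ContinuousLinearMap.lsmul ℝ ℝ, μ] g) x‖ ≤
      ∫ y, ‖iteratedFDeriv ℝ j g y‖ ∂μ := by
  induction j generalizing F with
  | zero =>
    simp only [norm_iteratedFDeriv_zero]
    calc ‖(w ⋆[ContinuousLinearMap.lsmul ℝ ℝ, μ] g) x‖
        ≤ ∫ y, ‖w y • g (x - y)‖ ∂μ := norm_integral_le_integral_norm _
      _ ≤ ∫ y, ‖g (x - y)‖ ∂μ := by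
        refine integral_mono_of_nonneg (.of_forall fun y => norm_nonneg _)
          ((hg.continuous.integrable_of_hasCompactSupport hcg).comp_sub_left x).norm
          (.of_forall fun y => ?_)
        simp only [norm_smul]
        exact mul_le_of_le_one_left (norm_nonneg _) (hw1 y)
      _ = ∫ y, ‖g y‖ ∂μ := integral_sub_left_eq_self (fun y => ‖g y‖) μ x
  | succ j ih =>
    have hfderiv : fderiv ℝ (w ⋆[ContinuousLinearMap.lsmul ℝ ℝ, μ] g) =
        w ⋆[ContinuousLinearMap.lsmul ℝ ℝ, μ] fderiv ℝ g := by
      ext1 x₀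
      rw [(hcg.hasFDerivAt_convolution_right _ hw (hg.of_le (by simp)) x₀).fderiv]
      congr 1
    rw [← norm_iteratedFDeriv_fderiv, hfderiv]
    simp_rw [← norm_iteratedFDeriv_fderiv (n := j)]
    exact ih (hg.fderiv_right (by simp)) (hcg.fderiv ℝ)

theorem convolution_eq_of_eqOn_ball {G : Type*} [NormedAddCommGroup G] [MeasurableSpace G]
    [BorelSpace G] {μ : Measure G} [μ.IsAddLeftInvariant] [μ.IsNegInvariant]
    {w ρ : G → ℝ} (hρ : ∫ y, ρ y ∂μ = 1) {ε : ℝ} (hρε : ∀ z, ε ≤ ‖z‖ → ρ z = 0) {x : G}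
    (hw : ∀ y ∈ ball x ε, w y = w x) : (w ⋆[ContinuousLinearMap.lsmul ℝ ℝ, μ] ρ) x = w x := by
  have h : ∀ y, w y • ρ (x - y) = w x * ρ (x - y) := fun y => by
    by_cases hy : y ∈ ball x ε
    · rw [hw y hy, smul_eq_mul]
    · rw [hρε _ (by simpa [mem_ball, dist_eq_norm'] using hy), smul_zero, mul_zero]
  simp only [convolution_def, ContinuousLinearMap.lsmul_apply, h]
  rw [integral_const_mul, integral_sub_left_eq_self ρ μ x, hρ, mul_one]

theorem norm_iteratedFDeriv_comp_smul_le {E F : Type*} [NormedAddCommGroup E] [NormedSpace ℝ E]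
    [NormedAddCommGroup F] [NormedSpace ℝ F]
    {φ : E → F} (hφ : ContDiff ℝ ∞ φ) (a : ℝ) (j : ℕ) (x : E) :
    ‖iteratedFDeriv ℝ j (fun y => φ (a • y)) x‖ ≤ |a| ^ j * ‖iteratedFDeriv ℝ j φ (a • x)‖ := by
  set L : E →L[ℝ] E := a • ContinuousLinearMap.id ℝ E
  have hL : ‖L‖ ≤ |a| := (norm_smul_le a (ContinuousLinearMap.id ℝ E)).trans <| by
    simpa using mul_le_of_le_one_right (abs_nonneg a)
      (ContinuousLinearMap.norm_id_le (𝕜 := ℝ) (E := E))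
  rw [show (fun y => φ (a • y)) = φ ∘ L from rfl,
    L.iteratedFDeriv_comp_right hφ x (by exact_mod_cast le_top)]
  calc _ ≤ ‖iteratedFDeriv ℝ j φ (L x)‖ * ∏ _i : Fin j, ‖L‖ :=
        ContinuousMultilinearMap.norm_compContinuousLinearMap_le _ _
    _ ≤ ‖iteratedFDeriv ℝ j φ (a • x)‖ * |a| ^ j := by
        rw [Finset.prod_const, Finset.card_univ, Fintype.card_fin]
        gcongr
        rfl
    _ = _ := mul_comm _ _

section Cutoff

-- `E : Type` because `norm_iteratedFDeriv_convolution_le` is applied with `F = ℝ`.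
variable {E : Type} [NormedAddCommGroup E] [NormedSpace ℝ E] [FiniteDimensional ℝ E]
  [MeasurableSpace E] [BorelSpace E]

theorem integral_norm_iteratedFDeriv_rescale_le (μ : Measure E) [μ.IsAddHaarMeasure]
    {φ : E → ℝ} (hφ : ContDiff ℝ ∞ φ) (hcφ : HasCompactSupport φ) {ε : ℝ} (hε : 0 < ε)
    (j : ℕ) :
    ∫ x, ‖iteratedFDeriv ℝ j (fun y => (ε ^ Module.finrank ℝ E)⁻¹ • φ (ε⁻¹ • y)) x‖ ∂μ ≤
      (ε ^ j)⁻¹ * ∫ x, ‖iteratedFDeriv ℝ j φ x‖ ∂μ := by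
  set d := Module.finrank ℝ E with hd
  have hpt : ∀ x, ‖iteratedFDeriv ℝ j (fun y => (ε ^ d)⁻¹ • φ (ε⁻¹ • y)) x‖ ≤
      (ε ^ d)⁻¹ * ((ε ^ j)⁻¹ * ‖iteratedFDeriv ℝ j φ (ε⁻¹ • x)‖) := fun x => by
    have hc : ContDiffAt ℝ j (fun y => φ (ε⁻¹ • y)) x :=
      ((hφ.comp (contDiff_const_smul _)).of_le (by exact_mod_cast le_top)).contDiffAt
    rw [iteratedFDeriv_const_smul_apply' hc, norm_smul, Real.norm_of_nonneg (by positivity)]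
    gcongr
    simpa [abs_of_pos hε] using norm_iteratedFDeriv_comp_smul_le hφ ε⁻¹ j x
  have hint : Integrable (fun x => ‖iteratedFDeriv ℝ j φ (ε⁻¹ • x)‖) μ :=
    ((hφ.continuous_iteratedFDeriv (by exact_mod_cast le_top)).integrable_of_hasCompactSupport
      (hcφ.iteratedFDeriv j)).norm.comp_smul (inv_ne_zero hε.ne')
  calc _ ≤ ∫ x, (ε ^ d)⁻¹ * ((ε ^ j)⁻¹ * ‖iteratedFDeriv ℝ j φ (ε⁻¹ • x)‖) ∂μ :=
        integral_mono_of_nonneg (.of_forall fun _ => norm_nonneg _)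
          ((hint.const_mul _).const_mul _) (.of_forall hpt)
    _ = (ε ^ j)⁻¹ * ∫ x, ‖iteratedFDeriv ℝ j φ x‖ ∂μ := by
        rw [integral_const_mul, integral_const_mul,
          Measure.integral_comp_inv_smul_of_nonneg μ (fun x => ‖iteratedFDeriv ℝ j φ x‖) hε.le,
          smul_eq_mul, ← hd]
        field_simp

theorem exists_mollifier (μ : Measure E) [μ.IsAddHaarMeasure] :
    ∃ I : ℕ → ℝ, (∀ j, 0 ≤ I j) ∧ ∀ ε, 0 < ε → ∃ ρ : E → ℝ, ContDiff ℝ ∞ ρ ∧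
      HasCompactSupport ρ ∧ ∫ y, ρ y ∂μ = 1 ∧ (∀ z, ε ≤ ‖z‖ → ρ z = 0) ∧
      ∀ j, ∫ y, ‖iteratedFDeriv ℝ j ρ y‖ ∂μ ≤ I j / ε ^ j := by
  let b : ContDiffBump (0 : E) := ⟨1 / 2, 1, by norm_num, by norm_num⟩
  refine ⟨fun j => ∫ x, ‖iteratedFDeriv ℝ j (b.normed μ) x‖ ∂μ,
    fun j => integral_nonneg fun _ => norm_nonneg _, fun ε hε => ?_⟩
  set ρ : E → ℝ := fun y => (ε ^ Module.finrank ℝ E)⁻¹ • b.normed μ (ε⁻¹ • y)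
  have hρε : ∀ z, ε ≤ ‖z‖ → ρ z = 0 := fun z hz => by
    have : b.normed μ (ε⁻¹ • z) = 0 := Function.notMem_support.1 fun h => by
      rw [b.support_normed_eq, mem_ball_zero_iff, norm_smul, Real.norm_of_nonneg (by positivity),
        inv_mul_lt_iff₀ hε] at h
      change ‖z‖ < ε * 1 at h
      linarith
    simp [ρ, this]
  refine ⟨ρ, (b.contDiff_normed.comp (contDiff_const_smul _)).const_smul _,
    HasCompactSupport.intro (isCompact_closedBall 0 ε) fun z hz => hρε z ?_, ?_, hρε,
    fun j => ?_⟩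
  · rw [mem_closedBall_zero_iff, not_le] at hz
    exact hz.le
  · simp only [ρ, smul_eq_mul, integral_const_mul]
    rw [Measure.integral_comp_inv_smul_of_nonneg μ _ hε.le, b.integral_normed, smul_eq_mul,
      mul_one, inv_mul_cancel₀ (by positivity)]
  · rw [div_eq_inv_mul]
    exact integral_norm_iteratedFDeriv_rescale_le μ b.contDiff_normed b.hasCompactSupport_normed
      hε j

theorem exists_contDiff_cutoff (k : ℕ) :
    ∃ I : ℝ, 0 ≤ I ∧ ∀ (F : Set E) (ε : ℝ), 0 < ε → ∃ χ : E → ℝ, ContDiff ℝ ∞ χ ∧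
      EqOn χ 1 (cthickening ε F) ∧ EqOn χ 0 (thickening (3 * ε) F)ᶜ ∧
      ∀ j ≤ k, ∀ x, ‖iteratedFDeriv ℝ j χ x‖ ≤ I / ε ^ j := by
  let μ : Measure E := Measure.addHaar
  obtain ⟨J, hJ, hmoll⟩ := exists_mollifier μ
  refine ⟨∑ j ∈ Finset.range (k + 1), J j, Finset.sum_nonneg fun j _ => hJ j, fun F ε hε => ?_⟩
  obtain ⟨ρ, hρc, hρcs, hρ, hρε, hρd⟩ := hmoll ε hε
  set A := thickening (2 * ε) F
  set w := A.indicator (1 : E → ℝ)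
  have hw : LocallyIntegrable w μ :=
    (locallyIntegrable_const 1).indicator isOpen_thickening.measurableSet
  have hw1 : ∀ y, ‖w y‖ ≤ 1 := fun y => by
    by_cases hy : y ∈ A <;> simp [w, hy]
  refine ⟨w ⋆[ContinuousLinearMap.lsmul ℝ ℝ, μ] ρ,
    hρcs.contDiff_convolution_right _ hw hρc, fun x hx => ?_, fun x hx => ?_, fun j hj x => ?_⟩
  · have hA : ball x ε ⊆ A := (ball_subset_thickening hx ε).trans
      ((thickening_cthickening_subset ε hε.le F).trans_eq (by rw [← two_mul]))
    rw [convolution_eq_of_eqOn_ball hρ hρε fun y hy => by simp [w, hA hy, hA (mem_ball_self hε)]]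
    simp [w, hA (mem_ball_self hε)]
  · have hsub : thickening ε A ⊆ thickening (3 * ε) F :=
      (thickening_thickening_subset ε (2 * ε) F).trans_eq (by ring_nf)
    have hA : ∀ y ∈ ball x ε, y ∉ A := fun y hy hyA =>
      hx (hsub (mem_thickening_iff.2 ⟨y, hyA, mem_ball'.1 hy⟩))
    rw [convolution_eq_of_eqOn_ball hρ hρε fun y hy => by
      simp [w, hA y hy, hA x (mem_ball_self hε)]]
    simp [w, hA x (mem_ball_self hε)]
  · calc ‖iteratedFDeriv ℝ j (w ⋆[ContinuousLinearMap.lsmul ℝ ℝ, μ] ρ) x‖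
        ≤ ∫ y, ‖iteratedFDeriv ℝ j ρ y‖ ∂μ :=
          norm_iteratedFDeriv_convolution_le hw hw1 hρc hρcs j x
      _ ≤ J j / ε ^ j := hρd j
      _ ≤ (∑ j ∈ Finset.range (k + 1), J j) / ε ^ j := by
          gcongr
          exact Finset.single_le_sum (fun j _ => hJ j) (Finset.mem_range.2 (by omega))

theorem exists_cutoff_norm_iteratedFDerivWithin_smul_le {F : Type*} [NormedAddCommGroup F]
    [NormedSpace ℝ F] {Ω : Set E} (hΩ : IsOpen Ω) {g : E → F} (hg : ContDiffOn ℝ ∞ g Ω)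
    {K : Set E} (hK : IsCompact K) (hKΩ : K ⊆ Ω) (k : ℕ)
    (hflat : ∀ i ≤ k, ∀ y ∈ K, iteratedFDerivWithin ℝ i g Ω y = 0) :
    ∃ P ε₀ : ℝ, 0 ≤ P ∧ 0 < ε₀ ∧ ∀ ε, 0 < ε → ε ≤ ε₀ → ∃ χ : E → ℝ, ContDiff ℝ ∞ χ ∧
      EqOn χ 1 (cthickening ε K) ∧
      ∀ i ≤ k, ∀ x ∈ Ω, ‖iteratedFDerivWithin ℝ i (fun x => χ x • g x) Ω x‖ ≤ P * ε := by
  obtain ⟨I, hI, hcut⟩ := exists_contDiff_cutoff (E := E) k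
  obtain ⟨δ, hδ, hδΩ⟩ := hK.exists_cthickening_subset_open hΩ hKΩ
  obtain ⟨B, hB0, hB⟩ := hg.exists_bound_iteratedFDerivWithin hΩ.uniqueDiffOn hK.cthickening hδΩ
    (k + 1)
  refine ⟨2 ^ k * (I * B * 3 ^ (k + 1)), min 1 (δ / 3), by positivity, by positivity,
    fun ε hε hεδ => ?_⟩
  obtain ⟨χ, hχ, hχ1, hχ0, hχd⟩ := hcut K ε hε
  refine ⟨χ, hχ, hχ1, fun i hi x hx => ?_⟩
  by_cases hx3 : x ∈ cthickening (3 * ε) K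
  · obtain ⟨y, hy, hxy⟩ : ∃ y ∈ K, x ∈ closedBall y (3 * ε) := by
      simpa only [hK.cthickening_eq_biUnion_closedBall (by positivity : (0 : ℝ) ≤ 3 * ε),
        mem_iUnion₂, exists_prop] using hx3
    have hball : closedBall y (3 * ε) ⊆ cthickening δ K :=
      (closedBall_subset_cthickening hy _).trans
        (cthickening_mono (by linarith [hεδ.trans (min_le_right _ _)]) K)
    refine norm_iteratedFDerivWithin_smul_le_of_scaled_bounds hχ.contDiffOn hg hΩ.uniqueDiffOn hx
      hI hB0 (by norm_num) hε (hεδ.trans (min_le_left _ _)) (fun j hj => ?_) (fun m hm => ?_) hi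
    · rw [iteratedFDerivWithin_of_isOpen j hΩ hx]
      exact hχd j hj x
    · exact norm_iteratedFDerivWithin_le_of_flat hΩ.uniqueDiffOn
        (hg.of_le (by exact_mod_cast le_top))
        (hball.trans hδΩ) (fun z hz => hB (k + 1) le_rfl z (hball hz))
        (fun i hi => hflat i hi y hy) m hm x hxy
  · have hev : (fun x => χ x • g x) =ᶠ[𝓝[Ω] x] fun _ => 0 :=
      nhdsWithin_le_nhds <| eventually_of_mem (isClosed_cthickening.isOpen_compl.mem_nhds hx3)
        fun z hz => by simp [hχ0 fun h => hz (thickening_subset_cthickening _ _ h)]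
    rw [hev.iteratedFDerivWithin_eq (by simpa using hev.self_of_nhdsWithin hx) i,
      iteratedFDerivWithin_fun_zero]
    simp only [Pi.zero_apply, norm_zero]
    positivity

end Cutoff

theorem pnorm_le {n : ℕ} {Ω K : Set (Rn n)} {k : ℕ} {g : Rn n → ℂ} {b : ℝ} (hb : 0 ≤ b)
    (h : ∀ i ≤ k, ∀ x ∈ K, ‖iteratedFDerivWithin ℝ i g Ω x‖ ≤ b) :
    pnorm Ω K k g ≤ (k + 1) * b := by
  calc pnorm Ω K k g ≤ ∑ _i ∈ Finset.range (k + 1), b :=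
        Finset.sum_le_sum fun i hi => Real.iSup_le (fun x => Real.iSup_le
          (h i (Nat.lt_succ_iff.1 (Finset.mem_range.1 hi)) x) hb) hb
    _ = (k + 1) * b := by simp

namespace CInfOn

variable {n : ℕ} {Ω : Set (Rn n)}

noncomputable def realMul (ψ : Rn n → ℝ) (hψ : ContDiff ℝ ∞ ψ) (ξ : CInfOn n Ω) : CInfOn n Ω :=
  ⟨fun x => ψ x • ξ.val x, hψ.contDiffOn.smul ξ.2.1, fun x hx => by simp [ξ.2.2 x hx]⟩

theorem realMul_apply (ψ : Rn n → ℝ) (hψ : ContDiff ℝ ∞ ψ) (ξ : CInfOn n Ω) (x : Rn n) :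
    (realMul ψ hψ ξ).val x = ψ x • ξ.val x := rfl

theorem iteratedFDerivWithin_smul (hΩ : IsOpen Ω) (c : ℂ) (η : CInfOn n Ω) {x : Rn n}
    (hx : x ∈ Ω) (i : ℕ) :
    iteratedFDerivWithin ℝ i (c • η).val Ω x = c • iteratedFDerivWithin ℝ i η.val Ω x :=
  iteratedFDerivWithin_const_smul_apply
    ((η.2.1.of_le (by exact_mod_cast le_top)).contDiffWithinAt hx) hΩ.uniqueDiffOn hx

def derivNhd (ξ : CInfOn n Ω) (K : Set (Rn n)) (m : ℕ) (ε : ℝ) : Set (CInfOn n Ω) :=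
  {η | ∀ i ≤ m, ∀ x ∈ K,
    ‖iteratedFDerivWithin ℝ i η.val Ω x - iteratedFDerivWithin ℝ i ξ.val Ω x‖ ≤ ε}

theorem exists_derivNhd_subset {ξ : CInfOn n Ω} {W : Set (CInfOn n Ω)} (hW : W ∈ 𝓝 ξ) :
    ∃ K, IsCompact K ∧ K ⊆ Ω ∧ ∃ m ε, 0 < ε ∧ derivNhd ξ K m ε ⊆ W := by
  rw [nhds_induced, mem_comap] at hW
  obtain ⟨T, hT, hTW⟩ := hW
  rw [nhds_pi, Filter.mem_pi] at hT
  obtain ⟨I, hI, t, ht, hIT⟩ := hT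
  have key : ∀ i, ∃ S : Set (Rn n), (IsCompact S ∧ S ⊆ Ω) ∧ ∃ ε > 0, ∀ η : CInfOn n Ω,
      (∀ x ∈ S, dist (iteratedFDerivWithin ℝ i η.val Ω x)
        (iteratedFDerivWithin ℝ i ξ.val Ω x) < ε) → derivsMap n Ω η.val i ∈ t i := by
    intro i
    obtain ⟨⟨S, U⟩, ⟨hS, hU⟩, hSU⟩ := (UniformOnFun.hasBasis_nhds _ _ (cptsIn n Ω)
      (derivsMap n Ω ξ.val i) ⟨∅, isCompact_empty, empty_subset _⟩
      (fun a ha b hb => ⟨a ∪ b, ⟨ha.1.union hb.1, union_subset ha.2 hb.2⟩,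
        subset_union_left, subset_union_right⟩)).mem_iff.1 (ht i)
    obtain ⟨ε, hε, hεU⟩ := mem_uniformity_dist.1 hU
    exact ⟨S, hS, ε, hε, fun η hη => hSU fun x hx => hεU (hη x hx)⟩
  choose S hS ε hε hkey using key
  obtain ⟨m, hm⟩ := hI.bddAbove
  obtain ⟨δ, hδ, hδε⟩ : ∃ δ : ℝ, 0 < δ ∧ ∀ i ∈ I, δ < ε i :=
    ((eventually_mem_nhdsWithin.and ((hI.eventually_all).2 fun i _ =>
      Ioo_mem_nhdsGT (hε i))).exists (f := 𝓝[>] (0 : ℝ))).imp fun δ h =>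
        ⟨h.1, fun i hi => (h.2 i hi).2⟩
  refine ⟨⋃ i ∈ I, S i, hI.isCompact_biUnion fun i _ => (hS i).1,
    iUnion₂_subset fun i _ => (hS i).2, m, δ, hδ, fun η hη => hTW (hIT fun i hi => ?_)⟩
  refine hkey i η fun x hx => ?_
  rw [dist_eq_norm]
  exact (hη i (hm hi) x (mem_biUnion hi hx)).trans_lt (hδε i hi)

theorem exists_smul_mem_of_mem_nhds_zero (hΩ : IsOpen Ω) {V : Set (CInfOn n Ω)}
    (hV : V ∈ 𝓝 (0 : CInfOn n Ω)) (η : CInfOn n Ω) : ∃ c : ℝ, 0 < c ∧ (c : ℂ) • η ∈ V := by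
  obtain ⟨K, hK, hKΩ, m, ε, hε, hV⟩ := exists_derivNhd_subset hV
  obtain ⟨C, hC, hηC⟩ := η.2.1.exists_bound_iteratedFDerivWithin hΩ.uniqueDiffOn hK hKΩ m
  refine ⟨ε / (C + 1), by positivity, hV fun i hi x hx => ?_⟩
  rw [iteratedFDerivWithin_smul hΩ _ _ (hKΩ hx), ZeroMemClass.coe_zero,
    iteratedFDerivWithin_zero, Pi.zero_apply, sub_zero, norm_smul, Complex.norm_real,
    Real.norm_of_nonneg (by positivity)]
  calc ε / (C + 1) * ‖iteratedFDerivWithin ℝ i η.val Ω x‖ ≤ ε / (C + 1) * (C + 1) := by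
        gcongr; linarith [hηC i hi x hx]
    _ = ε := by field_simp

theorem exists_realMul_mem_derivNhd (hΩ : IsOpen Ω) (ξ : CInfOn n Ω) {K : Set (Rn n)}
    (hK : IsCompact K) (hKΩ : K ⊆ Ω) (m : ℕ) {ε : ℝ} (hε : 0 ≤ ε) :
    ∃ χ : Rn n → ℝ, ∃ hχ : ContDiff ℝ ∞ χ, HasCompactSupport (realMul χ hχ ξ).val ∧
      tsupport (realMul χ hχ ξ).val ⊆ Ω ∧ realMul χ hχ ξ ∈ derivNhd ξ K m ε := by
  obtain ⟨δ, hδ, hδΩ⟩ := hK.exists_cthickening_subset_open hΩ hKΩ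
  obtain ⟨χ, hχ1, hχ0, -⟩ := exists_contMDiffMap_one_nhds_of_subset_interior 𝓘(ℝ, Rn n) (n := ⊤)
    hK.isClosed ((self_subset_thickening hδ K).trans (thickening_subset_interior_cthickening δ K))
  have hχ : ContDiff ℝ ∞ χ := contMDiff_iff_contDiff.1 χ.contMDiff
  have hδK : tsupport (realMul χ hχ ξ).val ⊆ cthickening δ K :=
    (tsupport_smul_subset_left _ _).trans
      (closure_minimal (fun z hz => by_contra fun h => hz (hχ0 z h)) isClosed_cthickening)
  refine ⟨χ, hχ, hK.cthickening.of_isClosed_subset (isClosed_tsupport _) hδK, hδK.trans hδΩ,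
    fun i _ x hx => ?_⟩
  have hev : (realMul χ hχ ξ).val =ᶠ[𝓝[Ω] x] ξ.val := nhdsWithin_le_nhds <|
    (hχ1.filter_mono (nhds_le_nhdsSet hx)).mono fun z hz => by simp [realMul_apply, hz]
  rw [hev.iteratedFDerivWithin_eq (hev.self_of_nhdsWithin (hKΩ hx)) i, sub_self, norm_zero]
  exact hε

end CInfOn

section Support

variable {n : ℕ} {Ω : Set (Rn n)}

theorem suppFun_subset_tsupport (g : Rn n → ℂ) : suppFun Ω g ⊆ tsupport g :=
  fun _ hx => closure_mono (fun _ hy => hy.2) hx.1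

theorem suppFun_smul_subset (c : ℂ) (g : Rn n → ℂ) : suppFun Ω (c • g) ⊆ suppFun Ω g :=
  fun _ hx => ⟨closure_mono (fun y (hy : y ∈ Ω ∧ c * g y ≠ 0) =>
    (⟨hy.1, right_ne_zero_of_mul hy.2⟩ : y ∈ Ω ∧ g y ≠ 0)) hx.1, hx.2⟩

theorem exists_isOpen_forall_eq_zero_of_notMem_fsupp {S : Type*} {coeF : S → Rn n → ℂ}
    {f : S → ℂ} {x : Rn n} (hx : x ∈ Ω) (hxf : x ∉ fsupp Ω coeF f) :
    ∃ G, IsOpen G ∧ G ⊆ Ω ∧ x ∈ G ∧ ∀ ζ, suppFun Ω (coeF ζ) ⊆ G → f ζ = 0 := by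
  simpa [fsupp, hx] using hxf

theorem isClosed_fsupp_inter {S : Type*} {coeF : S → Rn n → ℂ} {f : S → ℂ} {K : Set (Rn n)}
    (hK : IsClosed K) (hKΩ : K ⊆ Ω) : IsClosed (fsupp Ω coeF f ∩ K) := by
  refine closure_subset_iff_isClosed.1 fun z hz => ?_
  have hzK : z ∈ K := hK.closure_subset (closure_mono inter_subset_right hz)
  refine ⟨⟨hKΩ hzK, fun G hGo hGΩ hzG => ?_⟩, hzK⟩
  obtain ⟨w, hwG, hwf⟩ := mem_closure_iff.1 hz G hGo hzG
  exact hwf.1.2 G hGo hGΩ hwG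

end Support

section Vanishing

variable {n : ℕ} {Ω : Set (Rn n)} {M : ℝ} {V : Set (CInfOn n Ω)} {f : CInfOn n Ω → ℂ}

theorem map_eq_zero_of_disjoint_fsupp (hΩ : IsOpen Ω) (hM : 0 ≤ M)
    (hV : V ∈ 𝓝 (0 : CInfOn n Ω)) (hf : DemiK (fun t : ℂ => (M : ℂ) * t) V f)
    {η : CInfOn n Ω} (hη : HasCompactSupport η.val) (hηΩ : tsupport η.val ⊆ Ω)
    (hdisj : Disjoint (tsupport η.val) (fsupp Ω Subtype.val f)) : f η = 0 := by
  have hloc : ∀ x : tsupport η.val, ∃ G, IsOpen G ∧ G ⊆ Ω ∧ (x : Rn n) ∈ G ∧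
      ∀ ζ : CInfOn n Ω, suppFun Ω ζ.val ⊆ G → f ζ = 0 := fun x =>
    exists_isOpen_forall_eq_zero_of_notMem_fsupp (hηΩ x.2) (hdisj.notMem_of_mem_left x.2)
  choose G hGo _ hxG hG using hloc
  obtain ⟨T, hT⟩ := hη.elim_finite_subcover G hGo fun x hx => mem_iUnion.2 ⟨⟨x, hx⟩, hxG _⟩
  obtain ⟨p, hp⟩ := SmoothPartitionOfUnity.exists_isSubordinate 𝓘(ℝ, Rn n)
    (isClosed_tsupport η.val) (fun j : T => G j) (fun j => hGo j) fun x hx => by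
      obtain ⟨i, hiT, hxi⟩ := mem_iUnion₂.1 (hT hx)
      exact mem_iUnion.2 ⟨⟨i, hiT⟩, hxi⟩
  have hpc : ∀ j, ContDiff ℝ ∞ (p j) := fun j => contMDiff_iff_contDiff.1 (p j).contMDiff
  set piece := fun j => CInfOn.realMul (p j) (hpc j) η
  have hsum : η = ∑ j, piece j := by
    refine Subtype.ext (funext fun x => ?_)
    simp only [Submodule.coe_sum, Finset.sum_apply, piece, CInfOn.realMul_apply,
      ← Finset.sum_smul]
    by_cases hx : x ∈ tsupport η.val
    · rw [← finsum_eq_sum_of_fintype, p.sum_eq_one hx, one_smul]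
    · rw [image_eq_zero_of_notMem_tsupport hx, smul_zero]
  have hper : ∀ j, Function.Periodic f (piece j) := fun j => by
    obtain ⟨c, hc, hcV⟩ := CInfOn.exists_smul_mem_of_mem_nhds_zero hΩ hV (piece j)
    refine hf.periodic_of_map_smul_eq_zero hM hc hcV (hG j.1 _ ?_)
    calc suppFun Ω ((c : ℂ) • (piece j).val) ⊆ suppFun Ω (piece j).val := suppFun_smul_subset _ _
      _ ⊆ tsupport (piece j).val := suppFun_subset_tsupport _
      _ ⊆ tsupport (p j) := tsupport_smul_subset_left _ _
      _ ⊆ G j := hp j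
  rw [hsum, (Finset.sum_induction piece (Function.Periodic f)
    (fun _ _ => Function.Periodic.add_period) (fun x => by simp) fun j _ => hper j).eq, hf.1]


theorem map_sub_realMul_eq_zero (hΩ : IsOpen Ω) (hM : 0 ≤ M)
    (hV : V ∈ 𝓝 (0 : CInfOn n Ω)) (hf : DemiK (fun t : ℂ => (M : ℂ) * t) V f)
    {ξ : CInfOn n Ω} (hξ : HasCompactSupport ξ.val) (hξΩ : tsupport ξ.val ⊆ Ω)
    {χ : Rn n → ℝ} (hχ : ContDiff ℝ ∞ χ) {U : Set (Rn n)} (hU : IsOpen U) (hχ1 : EqOn χ 1 U)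
    (hfU : fsupp Ω Subtype.val f ∩ tsupport ξ.val ⊆ U) :
    f (ξ - CInfOn.realMul χ hχ ξ) = 0 := by
  have hsub : tsupport (ξ - CInfOn.realMul χ hχ ξ).val ⊆ tsupport ξ.val ∩ Uᶜ := by
    refine closure_minimal (fun z hz => ⟨subset_tsupport _ fun h => hz ?_, fun hzU => hz ?_⟩)
      ((isClosed_tsupport _).inter hU.isClosed_compl)
    · simp [CInfOn.realMul_apply, h]
    · simp [CInfOn.realMul_apply, hχ1 hzU]
  exact map_eq_zero_of_disjoint_fsupp hΩ hM hV hf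
    (hξ.of_isClosed_subset (isClosed_tsupport _) (hsub.trans inter_subset_left))
    ((hsub.trans inter_subset_left).trans hξΩ)
    (disjoint_left.2 fun z hz hzf => (hsub hz).2 (hfU ⟨hzf, (hsub hz).1⟩))

theorem norm_map_add_sub_le_of_order (hΩ : IsOpen Ω) (hM : 0 ≤ M)
    (hV : V ∈ 𝓝 (0 : CInfOn n Ω)) (hf : DemiK (fun t : ℂ => (M : ℂ) * t) V f)
    {K : Set (Rn n)} (hKΩ : K ⊆ Ω) {C : ℝ} (hC : 0 ≤ C) {k : ℕ}
    (hord : ∀ ζ : CInfOn n Ω, suppFun Ω ζ.val ⊆ K → ‖f ζ‖ ≤ C * pnorm Ω K k ζ.val)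
    (x η : CInfOn n Ω) (hηK : suppFun Ω η.val ⊆ K) {b : ℝ} (hb : 0 ≤ b)
    (hηb : ∀ i ≤ k, ∀ y ∈ K, ‖iteratedFDerivWithin ℝ i η.val Ω y‖ ≤ b) :
    ‖f (x + η) - f x‖ ≤ M * C * ((k + 1) * b) := by
  obtain ⟨c, hc, hcV⟩ := CInfOn.exists_smul_mem_of_mem_nhds_zero hΩ hV η
  have hpn : pnorm Ω K k ((c : ℂ) • η).val ≤ (k + 1) * (c * b) :=
    pnorm_le (by positivity) fun i hi y hy => by
      rw [CInfOn.iteratedFDerivWithin_smul hΩ _ _ (hKΩ hy), norm_smul, Complex.norm_real,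
        Real.norm_of_nonneg hc.le]
      exact mul_le_mul_of_nonneg_left (hηb i hi y hy) hc.le
  have hsupp : suppFun Ω ((c : ℂ) • η).val ⊆ K := (suppFun_smul_subset (c : ℂ) η.val).trans hηK
  calc ‖f (x + η) - f x‖ ≤ M / c * ‖f ((c : ℂ) • η)‖ := hf.norm_map_add_sub_le hM x η hc hcV
    _ ≤ M / c * (C * pnorm Ω K k ((c : ℂ) • η).val) := by gcongr; exact hord _ hsupp
    _ ≤ M / c * (C * ((k + 1) * (c * b))) := by gcongr
    _ = M * C * ((k + 1) * b) := by field_simp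

theorem map_eq_zero_of_hasCompactSupport (hΩ : IsOpen Ω) (hM : 0 ≤ M)
    (hV : V ∈ 𝓝 (0 : CInfOn n Ω)) (hf : DemiK (fun t : ℂ => (M : ℂ) * t) V f) {k : ℕ}
    (horder : ∀ K : Set (Rn n), IsCompact K → K ⊆ Ω → ∃ C > 0,
      ∀ ζ : CInfOn n Ω, suppFun Ω ζ.val ⊆ K → ‖f ζ‖ ≤ C * pnorm Ω K k ζ.val)
    {ξ : CInfOn n Ω} (hξ : HasCompactSupport ξ.val) (hξΩ : tsupport ξ.val ⊆ Ω)
    (hflat : ∀ i ≤ k, ∀ x ∈ fsupp Ω Subtype.val f, iteratedFDerivWithin ℝ i ξ.val Ω x = 0) :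
    f ξ = 0 := by
  set K := tsupport ξ.val
  set F := fsupp Ω Subtype.val f ∩ K
  have hF : IsCompact F := hξ.of_isClosed_subset
    (isClosed_fsupp_inter (isClosed_tsupport _) hξΩ) inter_subset_right
  obtain ⟨C, hC, hord⟩ := horder K hξ hξΩ
  obtain ⟨P, ε₀, hP, hε₀, hcut⟩ := exists_cutoff_norm_iteratedFDerivWithin_smul_le hΩ ξ.2.1 hF
    (inter_subset_right.trans hξΩ) k fun i hi x hx => hflat i hi x hx.1
  have hbound : ∀ ε ∈ Ioc 0 ε₀, ‖f ξ‖ ≤ M * C * ((k + 1) * (P * ε)) := by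
    rintro ε ⟨hε, hεε₀⟩
    obtain ⟨χ, hχ, hχ1, hχd⟩ := hcut ε hε hεε₀
    set η := CInfOn.realMul χ hχ ξ
    have hfar : f (ξ - η) = 0 := map_sub_realMul_eq_zero hΩ hM hV hf hξ hξΩ hχ isOpen_thickening
      (hχ1.mono (thickening_subset_cthickening _ _)) (self_subset_thickening hε F)
    have hηK : suppFun Ω η.val ⊆ K :=
      (suppFun_subset_tsupport _).trans (tsupport_smul_subset_right _ _)
    have h := norm_map_add_sub_le_of_order hΩ hM hV hf hξΩ hC.le hord (ξ - η) η hηK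
      (by positivity) fun i hi y hy => hχd i hi y (hξΩ hy)
    rwa [sub_add_cancel, hfar, sub_zero] at h
  have hlim : Tendsto (fun ε => M * C * ((k + 1) * (P * ε))) (𝓝[>] 0) (𝓝 0) := by
    have : Continuous fun ε : ℝ => M * C * ((k + 1) * (P * ε)) := by fun_prop
    simpa using (this.tendsto 0).mono_left nhdsWithin_le_nhds
  exact norm_le_zero_iff.1 (ge_of_tendsto hlim (eventually_of_mem (Ioc_mem_nhdsGT hε₀) hbound))

end Vanishing

theorem stmt17_general (n : ℕ) (Ω : Set (Rn n)) (hΩ : IsOpen Ω)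
    (M : ℝ) (hM : 1 ≤ M)
    (V : Set (CInfOn n Ω)) (hV : V ∈ 𝓝 (0 : CInfOn n Ω))
    (f : CInfOn n Ω → ℂ) (hf : DemiK (fun t : ℂ => (M : ℂ) * t) V f)
    (hc : Continuous f) (k : ℕ)
    (horder : ∀ K : Set (Rn n), IsCompact K → K ⊆ Ω → ∃ C > 0,
      ∀ ξ : CInfOn n Ω, suppFun Ω ξ.val ⊆ K → ‖f ξ‖ ≤ C * pnorm Ω K k ξ.val)
    (ξ : CInfOn n Ω)
    (hξ : ∀ i ≤ k, ∀ x ∈ fsupp Ω Subtype.val f,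
      iteratedFDerivWithin ℝ i ξ.val Ω x = 0) :
    f ξ = 0 := by
  by_contra hξ0
  obtain ⟨K, hK, hKΩ, m, ε, hε, hW⟩ := CInfOn.exists_derivNhd_subset
    (hc.continuousAt.preimage_mem_nhds (isOpen_ne.mem_nhds hξ0) : {ζ | f ζ ≠ 0} ∈ 𝓝 ξ)
  obtain ⟨χ, hχ, hcs, hsupp, hmem⟩ := CInfOn.exists_realMul_mem_derivNhd hΩ ξ hK hKΩ m hε.le
  refine hW hmem (map_eq_zero_of_hasCompactSupport hΩ (by linarith) hV hf horder hcs hsupp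
    fun i hi x hx => ?_)
  exact iteratedFDerivWithin_smul_eq_zero (hχ.of_le (by exact_mod_cast le_top)).contDiffOn
    (ξ.2.1.of_le (by exact_mod_cast le_top)) hΩ.uniqueDiffOn hx.1
    fun j hj => hξ j (hj.trans hi) x hx

/-- if `f ∈ C^∞(Ω)^{[γ,V]}` (`γ t = M·t`, `M ≥ 1`) is of order `≤ k` and all
derivatives of `ξ` of order `≤ k` vanish on `supp f`, then `f ξ = 0`. -/
theorem stmt17 (n : ℕ) (Ω : Set (Rn n)) (hΩ : IsOpen Ω) (hne : Ω.Nonempty)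
    (M : ℝ) (hM : 1 ≤ M)
    (V : Set (CInfOn n Ω)) (hV : V ∈ 𝓝 (0 : CInfOn n Ω))
    (f : CInfOn n Ω → ℂ) (hf : DemiK (fun t : ℂ => (M : ℂ) * t) V f)
    (hc : Continuous f) (k : ℕ)
    (horder : ∀ K : Set (Rn n), IsCompact K → K ⊆ Ω → ∃ C > 0,
      ∀ ξ : CInfOn n Ω, suppFun Ω ξ.val ⊆ K → ‖f ξ‖ ≤ C * pnorm Ω K k ξ.val)
    (ξ : CInfOn n Ω)
    (hξ : ∀ i ≤ k, ∀ x ∈ fsupp Ω Subtype.val f,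
      iteratedFDerivWithin ℝ i ξ.val Ω x = 0) :
    f ξ = 0 :=
  stmt17_general n Ω hΩ M hM V hV f hf hc k horder ξ hξ
end

section
/- Let g: ℂ → ℂ satisfy g(0) = 0 and suppose g is complex-differentiable at some z₀ ∈ ℂ with g′(z₀) ≠ 0. Let ε > 0. Then g ∈ 𝓚_{M,ε}(ℂ,ℂ) for some M ≥ 1 if and only if: (1) g is continuous; (2) g(z) ≠ 0 whenever 0 < |z| ≤ ε; (3) inf{|g(u)/u| : 0 < |u| ≤ ε} > 0; (4) sup{|(g(z+u)−g(z))/u| : z ∈ ℂ, 0 < |u| ≤ ε} < +∞. -/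
open Topology Filter Set

/-- The family `𝓚_{M,ε}(ℂ, ℂ)`. -/
def DemiKC (M ε : ℝ) (g : ℂ → ℂ) : Prop :=
  g 0 = 0 ∧ ∀ z u t : ℂ, ‖u‖ ≤ ε → ‖t‖ ≤ 1 →
    ∃ s : ℂ, ‖s‖ ≤ M * ‖t‖ ∧ g (z + t * u) = g z + s * g u

/-!
Taking `t = h / u` in the defining identity gives `|g(z + h) - g z| ≤ M |g u| |h| / |u|` whenever
`|h| ≤ |u| ≤ ε`. With `u = ε` this is a uniform Lipschitz bound for increments of size at most `ε`,
which yields continuity and the bounded difference quotients. At the point `z₀` it bounds the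
derivative: `|g'(z₀)| ≤ M |g u / u|`, so `g'(z₀) ≠ 0` keeps `|g u / u|` away from `0`.
Conversely, if `m |u| ≤ |g u|` and `|g(z + h) - g z| ≤ B |h|` for `|u|, |h| ≤ ε`, then
`s = (g(z + t u) - g z) / g u` satisfies `|s| ≤ (B / m) |t|`.
-/

namespace DemiKC

variable {M ε : ℝ} {g : ℂ → ℂ}

theorem norm_sub_mul_norm_le (hg : DemiKC M ε g) (z : ℂ) {u h : ℂ} (hu : ‖u‖ ≤ ε)
    (hh : ‖h‖ ≤ ‖u‖) : ‖g (z + h) - g z‖ * ‖u‖ ≤ M * ‖g u‖ * ‖h‖ := by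
  rcases eq_or_ne u 0 with rfl | hu0
  · obtain rfl : h = 0 := by simpa using hh
    simp
  have ht : ‖h / u‖ ≤ 1 := by
    rw [norm_div]
    exact div_le_one_of_le₀ hh (norm_nonneg u)
  obtain ⟨s, hs, hgs⟩ := hg.2 z u (h / u) hu ht
  rw [div_mul_cancel₀ h hu0] at hgs
  have hupos : 0 < ‖u‖ := norm_pos_iff.2 hu0
  calc ‖g (z + h) - g z‖ * ‖u‖ = ‖s‖ * ‖u‖ * ‖g u‖ := by
        rw [hgs, add_sub_cancel_left, norm_mul]; ring
    _ ≤ M * ‖h‖ * ‖g u‖ := by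
        gcongr ?_ * _
        rwa [norm_div, mul_div_assoc', le_div_iff₀ hupos] at hs
    _ = M * ‖g u‖ * ‖h‖ := by ring

theorem norm_sub_le (hg : DemiKC M ε g) (hε : 0 < ε) (z : ℂ) {h : ℂ} (hh : ‖h‖ ≤ ε) :
    ‖g (z + h) - g z‖ ≤ M * ‖g ε‖ / ε * ‖h‖ := by
  have hεn : ‖(ε : ℂ)‖ = ε := by simp [hε.le]
  have := hg.norm_sub_mul_norm_le z (u := ε) hεn.le (hεn ▸ hh)
  rw [hεn] at this
  rw [div_mul_eq_mul_div, le_div_iff₀ hε]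
  linarith

theorem continuous (hg : DemiKC M ε g) (hε : 0 < ε) : Continuous g :=
  continuous_iff_continuousAt.2 fun z =>
    continuousAt_of_locally_lipschitz hε _ fun y hy => by
      simpa [dist_eq_norm] using hg.norm_sub_le hε z (h := y - z) (dist_eq_norm y z ▸ hy.le)

theorem norm_mul_norm_le_of_hasDerivAt (hg : DemiKC M ε g) (hM : 0 ≤ M) {z₀ d : ℂ}
    (hd : HasDerivAt g d z₀) {u : ℂ} (hu : ‖u‖ ≤ ε) : ‖d‖ * ‖u‖ ≤ M * ‖g u‖ := by
  rcases eq_or_ne u 0 with rfl | hu0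
  · simp [hg.1]
  have hupos : 0 < ‖u‖ := norm_pos_iff.2 hu0
  suffices ‖d‖ ≤ M * ‖g u‖ / ‖u‖ by rwa [le_div_iff₀ hupos] at this
  refine hd.le_of_lip' (by positivity) ?_
  filter_upwards [Metric.closedBall_mem_nhds z₀ hupos] with y hy
  have := hg.norm_sub_mul_norm_le z₀ hu (mem_closedBall_iff_norm.1 hy)
  rw [add_sub_cancel] at this
  rw [div_mul_eq_mul_div, le_div_iff₀ hupos]
  linarith

theorem of_norm_bounds {m B : ℝ} (hg0 : g 0 = 0) (hm : 0 < m)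
    (hlow : ∀ u : ℂ, ‖u‖ ≤ ε → m * ‖u‖ ≤ ‖g u‖)
    (hinc : ∀ z h : ℂ, ‖h‖ ≤ ε → ‖g (z + h) - g z‖ ≤ B * ‖h‖) :
    DemiKC (max 1 (B / m)) ε g := by
  refine ⟨hg0, fun z u t hu ht => ?_⟩
  rcases eq_or_ne (t * u) 0 with htu | htu
  · refine ⟨0, ?_, by simp [htu]⟩
    rw [norm_zero]
    exact mul_nonneg (zero_le_one.trans (le_max_left _ _)) (norm_nonneg t)
  have hupos : 0 < ‖u‖ := norm_pos_iff.2 (right_ne_zero_of_mul htu)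
  have hgu : 0 < ‖g u‖ := (mul_pos hm hupos).trans_le (hlow u hu)
  have hgs : g (z + t * u) = g z + (g (z + t * u) - g z) / g u * g u := by
    rw [div_mul_cancel₀ _ (norm_pos_iff.1 hgu)]; ring
  refine ⟨_, ?_, hgs⟩
  have htu_le : ‖t * u‖ ≤ ε := by
    rw [norm_mul]
    nlinarith [norm_nonneg t]
  have hinc_tu := hinc z _ htu_le
  calc ‖(g (z + t * u) - g z) / g u‖ ≤ B * (‖t‖ * ‖u‖) / (m * ‖u‖) := by
        rw [norm_div, ← norm_mul]
        exact div_le_div₀ ((norm_nonneg _).trans hinc_tu) hinc_tu (by positivity) (hlow u hu)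
    _ = B / m * ‖t‖ := by field_simp
    _ ≤ max 1 (B / m) * ‖t‖ := by gcongr; exact le_max_right _ _

end DemiKC

section DifferenceQuotients

variable {𝕜 : Type*} {g : 𝕜 → 𝕜} {ε : ℝ}

theorem mem_upperBounds_norm_slope_iff [NormedField 𝕜] {B : ℝ} :
    B ∈ upperBounds ((fun p : 𝕜 × 𝕜 => ‖(g (p.1 + p.2) - g p.1) / p.2‖) ''
      {p : 𝕜 × 𝕜 | 0 < ‖p.2‖ ∧ ‖p.2‖ ≤ ε}) ↔
      ∀ z h : 𝕜, ‖h‖ ≤ ε → ‖g (z + h) - g z‖ ≤ B * ‖h‖ := by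
  simp only [mem_upperBounds, forall_mem_image, Prod.forall, mem_ofPred_eq]
  refine forall₂_congr fun z h => ?_
  rcases eq_or_ne h 0 with rfl | hh
  · simp
  · have hpos := norm_pos_iff.2 hh
    simp [hpos, norm_div, div_le_iff₀ hpos]

theorem mem_lowerBounds_norm_div_iff [NormedField 𝕜] (hg0 : g 0 = 0) {m : ℝ} :
    m ∈ lowerBounds ((fun u : 𝕜 => ‖g u / u‖) '' {u : 𝕜 | 0 < ‖u‖ ∧ ‖u‖ ≤ ε}) ↔
      ∀ u : 𝕜, ‖u‖ ≤ ε → m * ‖u‖ ≤ ‖g u‖ := by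
  simp only [mem_lowerBounds, forall_mem_image, mem_ofPred_eq]
  refine forall_congr' fun u => ?_
  rcases eq_or_ne u 0 with rfl | hu
  · simp [hg0]
  · have hpos := norm_pos_iff.2 hu
    simp [hpos, norm_div, le_div_iff₀ hpos]

theorem sInf_norm_div_pos_iff [NontriviallyNormedField 𝕜] (hε : 0 < ε) (hg0 : g 0 = 0) :
    0 < sInf ((fun u : 𝕜 => ‖g u / u‖) '' {u : 𝕜 | 0 < ‖u‖ ∧ ‖u‖ ≤ ε}) ↔
      ∃ m > 0, ∀ u : 𝕜, ‖u‖ ≤ ε → m * ‖u‖ ≤ ‖g u‖ := by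
  refine ⟨fun h => ⟨_, h, (mem_lowerBounds_norm_div_iff hg0).1 fun b hb => ?_⟩, ?_⟩
  · exact csInf_le ⟨0, forall_mem_image.2 fun _ _ => norm_nonneg _⟩ hb
  · rintro ⟨m, hm, hlow⟩
    obtain ⟨u, hu, huε⟩ := NormedField.exists_norm_lt 𝕜 hε
    exact hm.trans_le <|
      le_csInf ⟨_, u, ⟨hu, huε.le⟩, rfl⟩ ((mem_lowerBounds_norm_div_iff hg0).2 hlow)

end DifferenceQuotients

/-- characterization of the demi-linear functions `g ∈ 𝓚_{M,ε}(ℂ, ℂ)` among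
functions with `g 0 = 0` differentiable at some point with nonzero derivative. -/
theorem stmt18 (g : ℂ → ℂ) (hg0 : g 0 = 0)
    (z₀ d : ℂ) (hd : HasDerivAt g d z₀) (hd0 : d ≠ 0)
    (ε : ℝ) (hε : 0 < ε) :
    (∃ M : ℝ, 1 ≤ M ∧ DemiKC M ε g) ↔
      (Continuous g ∧
       (∀ z : ℂ, 0 < ‖z‖ → ‖z‖ ≤ ε → g z ≠ 0) ∧
       0 < sInf ((fun u : ℂ => ‖g u / u‖) '' {u : ℂ | 0 < ‖u‖ ∧ ‖u‖ ≤ ε}) ∧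
       BddAbove ((fun p : ℂ × ℂ => ‖(g (p.1 + p.2) - g p.1) / p.2‖) ''
         {p : ℂ × ℂ | 0 < ‖p.2‖ ∧ ‖p.2‖ ≤ ε})) := by
  constructor
  · rintro ⟨M, hM, hg⟩
    have hM0 : 0 < M := one_pos.trans_le hM
    have hm : 0 < ‖d‖ / M := div_pos (norm_pos_iff.2 hd0) hM0
    have hlow : ∀ u : ℂ, ‖u‖ ≤ ε → ‖d‖ / M * ‖u‖ ≤ ‖g u‖ := fun u hu => by
      rw [div_mul_eq_mul_div, div_le_iff₀' hM0]
      exact hg.norm_mul_norm_le_of_hasDerivAt hM0.le hd hu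
    refine ⟨hg.continuous hε, fun z hz hzε hgz => ?_,
      (sInf_norm_div_pos_iff hε hg0).2 ⟨_, hm, hlow⟩,
      ⟨_, mem_upperBounds_norm_slope_iff.2 (hg.norm_sub_le hε)⟩⟩
    have := hlow z hzε
    rw [hgz, norm_zero] at this
    exact (mul_pos hm hz).not_ge this
  · rintro ⟨-, -, hinf, B, hB⟩
    obtain ⟨m, hm, hlow⟩ := (sInf_norm_div_pos_iff hε hg0).1 hinf
    exact ⟨_, le_max_left _ _,
      .of_norm_bounds hg0 hm hlow (mem_upperBounds_norm_slope_iff.1 hB)⟩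
end
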